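/- arXiv:0910.4115 — 12 statements merged into one kernel-verified Lean document; each statement's English description precedes it below -/
import Mathlib

section
/- Let a < b be real numbers, let p > 1 and q be real numbers with 1/p + 1/q = 1, and let f, g : ℝ → ℝ be continuous functions that are positive on [a,b]. Suppose there are constants m, M with 0 < m and m ≤ f(t)^p / g(t)^q ≤ M for all t ∈ [a,b]. Then (∫_a^b f(t)^p dt)^(1/p) · (∫_a^b g(t)^q dt)^(1/q) ≤ (M/m)^(1/(p·q)) · ∫_a^b f(t)·g(t) dt. (This is the reverse Hölder inequality of Theorem 3.1 in the continuous case 𝕋 = ℝ, where the diamond-alpha integral reduces to the Lebesgue integral.) -/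
/-!
From `m ≤ f ^ p / g ^ q ≤ M` one gets the pointwise bounds `f ^ p ≤ M ^ (1/q) f g` and
`g ^ q ≤ m⁻¹ ^ (1/p) f g`, because `f ^ p = f · (f ^ p) ^ (1/q)` for conjugate exponents.
Integrating, raising to the powers `1/p`, `1/q` and multiplying, the two copies of `∫ f g`
recombine into one since `1/p + 1/q = 1`.
-/

open Set intervalIntegral

namespace Real.HolderConjugate

variable {p q : ℝ}

theorem rpow_le_mul_of_rpow_le_mul_rpow (hpq : p.HolderConjugate q) {x y C : ℝ}
    (hx : 0 ≤ x) (hy : 0 ≤ y) (hC : 0 ≤ C) (h : x ^ p ≤ C * y ^ q) :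
    x ^ p ≤ C ^ (1 / q) * (x * y) := by
  have hsplit : x ^ p = x * (x ^ p) ^ (1 / q) := by
    rw [← rpow_mul hx, mul_one_div, hpq.div_conj_eq_sub_one, ← rpow_one_add' hx (by
      simpa using hpq.ne_zero), add_sub_cancel]
  have hroot : (C * y ^ q) ^ (1 / q) = C ^ (1 / q) * y := by
    rw [mul_rpow hC (rpow_nonneg hy q), ← rpow_mul hy, mul_one_div_cancel hpq.symm.ne_zero,
      rpow_one]
  calc x ^ p = x * (x ^ p) ^ (1 / q) := hsplit
    _ ≤ x * (C * y ^ q) ^ (1 / q) := by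
      gcongr
      exact hpq.symm.one_div_nonneg
    _ = C ^ (1 / q) * (x * y) := by rw [hroot]; ring

theorem rpow_one_div_mul_rpow_one_div_le (hpq : p.HolderConjugate q) {A B I α β : ℝ}
    (hA : 0 ≤ A) (hB : 0 ≤ B) (hI : 0 ≤ I) (hα : 0 ≤ α) (hβ : 0 ≤ β)
    (hAI : A ≤ α * I) (hBI : B ≤ β * I) :
    A ^ (1 / p) * B ^ (1 / q) ≤ α ^ (1 / p) * β ^ (1 / q) * I := by
  have hsum : 1 / p + 1 / q = 1 := by simpa using hpq.one_div_add_one_div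
  calc A ^ (1 / p) * B ^ (1 / q) ≤ (α * I) ^ (1 / p) * (β * I) ^ (1 / q) := by
        gcongr
        exacts [hpq.one_div_nonneg, hpq.symm.one_div_nonneg]
    _ = α ^ (1 / p) * β ^ (1 / q) * (I ^ (1 / p) * I ^ (1 / q)) := by
        rw [mul_rpow hα hI, mul_rpow hβ hI]; ring
    _ = α ^ (1 / p) * β ^ (1 / q) * I := by
        rw [← rpow_add' hI (by rw [hsum]; exact one_ne_zero), hsum, rpow_one]

end Real.HolderConjugate

theorem intervalIntegral.integral_le_const_mul_integral_of_le_on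
    {μ : MeasureTheory.Measure ℝ} {f g : ℝ → ℝ} {a b c : ℝ} (hab : a ≤ b)
    (hf : IntervalIntegrable f μ a b) (hg : IntervalIntegrable g μ a b)
    (h : ∀ x ∈ Icc a b, f x ≤ c * g x) :
    ∫ x in a..b, f x ∂μ ≤ c * ∫ x in a..b, g x ∂μ := by
  rw [← integral_const_mul]
  exact integral_mono_on hab hf (hg.const_mul c) h

/-- Reverse Hölder inequality (Theorem 3.1, continuous case 𝕋 = ℝ). -/
theorem reverse_holder_continuous
    (a b p q m M : ℝ) (f g : ℝ → ℝ)
    (hab : a < b) (hp : 1 < p) (hpq : 1 / p + 1 / q = 1)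
    (hf : Continuous f) (hg : Continuous g)
    (hfpos : ∀ t ∈ Set.Icc a b, 0 < f t)
    (hgpos : ∀ t ∈ Set.Icc a b, 0 < g t)
    (hm : 0 < m)
    (hlb : ∀ t ∈ Set.Icc a b, m ≤ f t ^ p / g t ^ q)
    (hub : ∀ t ∈ Set.Icc a b, f t ^ p / g t ^ q ≤ M) :
    (∫ t in a..b, f t ^ p) ^ (1 / p) * (∫ t in a..b, g t ^ q) ^ (1 / q)
      ≤ (M / m) ^ (1 / (p * q)) * ∫ t in a..b, f t * g t := by
  have hconj : p.HolderConjugate q :=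
    Real.holderConjugate_iff.mpr ⟨hp, by simpa only [one_div] using hpq⟩
  have hM : 0 ≤ M := hm.le.trans ((hlb a ⟨le_rfl, hab.le⟩).trans (hub a ⟨le_rfl, hab.le⟩))
  have hfp : ∀ t ∈ Icc a b, f t ^ p ≤ M ^ (1 / q) * (f t * g t) := fun t ht ↦
    hconj.rpow_le_mul_of_rpow_le_mul_rpow (hfpos t ht).le (hgpos t ht).le hM
      ((div_le_iff₀ (Real.rpow_pos_of_pos (hgpos t ht) q)).mp (hub t ht))
  have hgq : ∀ t ∈ Icc a b, g t ^ q ≤ m⁻¹ ^ (1 / p) * (f t * g t) := fun t ht ↦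
    mul_comm (g t) (f t) ▸ hconj.symm.rpow_le_mul_of_rpow_le_mul_rpow (hgpos t ht).le
      (hfpos t ht).le (inv_nonneg.mpr hm.le) ((le_inv_mul_iff₀ hm).mpr
        ((le_div_iff₀ (Real.rpow_pos_of_pos (hgpos t ht) q)).mp (hlb t ht)))
  have hfg := (hf.mul hg).intervalIntegrable (μ := MeasureTheory.volume) a b
  calc (∫ t in a..b, f t ^ p) ^ (1 / p) * (∫ t in a..b, g t ^ q) ^ (1 / q)
      ≤ (M ^ (1 / q)) ^ (1 / p) * (m⁻¹ ^ (1 / p)) ^ (1 / q) * ∫ t in a..b, f t * g t :=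
        hconj.rpow_one_div_mul_rpow_one_div_le
          (integral_nonneg hab.le fun t ht ↦ Real.rpow_nonneg (hfpos t ht).le p)
          (integral_nonneg hab.le fun t ht ↦ Real.rpow_nonneg (hgpos t ht).le q)
          (integral_nonneg hab.le fun t ht ↦ (mul_pos (hfpos t ht) (hgpos t ht)).le)
          (by positivity) (by positivity)
          (integral_le_const_mul_integral_of_le_on hab.le
            ((hf.rpow_const fun _ ↦ Or.inr hconj.nonneg).intervalIntegrable a b) hfg hfp)
          (integral_le_const_mul_integral_of_le_on hab.le
            ((hg.rpow_const fun _ ↦ Or.inr hconj.symm.nonneg).intervalIntegrable a b) hfg hgq)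
    _ = (M / m) ^ (1 / (p * q)) * ∫ t in a..b, f t * g t := by
        rw [← Real.rpow_mul hM, ← Real.rpow_mul (inv_nonneg.mpr hm.le), one_div_mul_one_div,
          one_div_mul_one_div, mul_comm q p, ← Real.mul_rpow hM (inv_nonneg.mpr hm.le),
          ← div_eq_mul_inv]
end

section
/- Let a < b be real numbers and let p > 1, q with 1/p + 1/q = 1. Let K : ℝ × ℝ → ℝ be continuous and nonnegative on [a,b] × [a,b], let f, g : ℝ → ℝ be continuous and nonnegative on [a,b], and let φ, ψ : ℝ → ℝ be continuous and positive on [a,b]. Define F(x) = ∫_a^b K(x,y)·ψ(y)^(−p) dy and G(y) = ∫_a^b K(x,y)·φ(x)^(−q) dx. Then ∫_a^b ∫_a^b K(x,y)·f(x)·g(y) dx dy ≤ (∫_a^b φ(x)^p·F(x)·f(x)^p dx)^(1/p) · (∫_a^b ψ(y)^q·G(y)·g(y)^q dy)^(1/q). (This is inequality (5) of Theorem 3.4 in the continuous case 𝕋 = ℝ.) -/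
/-!
Split the integrand as `K f g = u v` with `u = K ^ (1/p) · (φ x / ψ y) · f x` and
`v = K ^ (1/q) · (ψ y / φ x) · g y`. Hölder's inequality on the square `[a,b]²` bounds the double
integral by `‖u‖_p ‖v‖_q`, and Fubini's theorem turns `∫∫ u ^ p` and `∫∫ v ^ q` into
`∫ φ ^ p F f ^ p` and `∫ ψ ^ q G g ^ q`.
-/

open MeasureTheory Set

namespace Real

variable {k w a b c s t p q : ℝ}

theorem HolderConjugate.mul_mul_eq_rpow_inv_mul_mul_rpow_inv_mul (hpq : p.HolderConjugate q)
    (hk : 0 ≤ k) (hw : w ≠ 0) : k * a * b = k ^ p⁻¹ * (w * a) * (k ^ q⁻¹ * (w⁻¹ * b)) := by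
  calc k * a * b = k ^ (p⁻¹ + q⁻¹) * (w * w⁻¹) * a * b := by
        rw [hpq.inv_add_inv_eq_one, rpow_one, mul_inv_cancel₀ hw, mul_one]
    _ = _ := by
        rw [rpow_add_of_nonneg hk (inv_nonneg.2 hpq.nonneg) (inv_nonneg.2 hpq.symm.nonneg)]
        ring

theorem rpow_inv_mul_rpow (hk : 0 ≤ k) (hc : 0 ≤ c) (hp : p ≠ 0) :
    (k ^ p⁻¹ * c) ^ p = k * c ^ p := by
  rw [mul_rpow (rpow_nonneg hk _) hc, rpow_inv_rpow hk hp]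

theorem mul_div_mul_rpow (hs : 0 < s) (ht : 0 < t) (ha : 0 ≤ a) :
    k * (s / t * a) ^ p = s ^ p * (k * t ^ (-p)) * a ^ p := by
  rw [mul_rpow (by positivity) ha, div_rpow hs.le ht.le, rpow_neg ht.le]
  ring

end Real

theorem ContinuousOn.comp_fst_prod {α β γ : Type*} [TopologicalSpace α] [TopologicalSpace β]
    [TopologicalSpace γ] {h : α → γ} {s : Set α} (hh : ContinuousOn h s) (t : Set β) :
    ContinuousOn (fun z : α × β => h z.1) (s ×ˢ t) :=
  hh.comp continuousOn_fst fun _ hz => hz.1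

theorem ContinuousOn.comp_snd_prod {α β γ : Type*} [TopologicalSpace α] [TopologicalSpace β]
    [TopologicalSpace γ] {h : β → γ} {t : Set β} (hh : ContinuousOn h t) (s : Set α) :
    ContinuousOn (fun z : α × β => h z.2) (s ×ˢ t) :=
  hh.comp continuousOn_snd fun _ hz => hz.2

section WeightedHolder

variable {Ω : Type*} [MeasurableSpace Ω] {μ : Measure Ω} {p q : ℝ} {k c w a b : Ω → ℝ}

theorem memLp_rpow_inv_mul (hp : 0 < p) (hk : ∀ᵐ ω ∂μ, 0 ≤ k ω) (hc : ∀ᵐ ω ∂μ, 0 ≤ c ω)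
    (hkm : AEStronglyMeasurable k μ) (hcm : AEStronglyMeasurable c μ)
    (hint : Integrable (fun ω => k ω * c ω ^ p) μ) :
    MemLp (fun ω => k ω ^ p⁻¹ * c ω) (ENNReal.ofReal p) μ := by
  have hm : AEStronglyMeasurable (fun ω => k ω ^ p⁻¹ * c ω) μ :=
    (hkm.aemeasurable.pow_const p⁻¹).aestronglyMeasurable.mul hcm
  rw [← integrable_norm_rpow_iff hm (by simpa using hp) ENNReal.ofReal_ne_top,
    ENNReal.toReal_ofReal hp.le]
  refine hint.congr ?_
  filter_upwards [hk, hc] with ω hkω hcω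
  rw [Real.norm_of_nonneg (by positivity), Real.rpow_inv_mul_rpow hkω hcω hp.ne']

theorem integrable_mul_mul_of_weighted (hpq : p.HolderConjugate q) (hk : ∀ᵐ ω ∂μ, 0 ≤ k ω)
    (hw : ∀ᵐ ω ∂μ, 0 < w ω) (ha : ∀ᵐ ω ∂μ, 0 ≤ a ω) (hb : ∀ᵐ ω ∂μ, 0 ≤ b ω)
    (hkm : AEStronglyMeasurable k μ) (hwm : AEStronglyMeasurable w μ)
    (ham : AEStronglyMeasurable a μ) (hbm : AEStronglyMeasurable b μ)
    (hA : Integrable (fun ω => k ω * (w ω * a ω) ^ p) μ)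
    (hB : Integrable (fun ω => k ω * ((w ω)⁻¹ * b ω) ^ q) μ) :
    Integrable (fun ω => k ω * a ω * b ω) μ := by
  have hwa : ∀ᵐ ω ∂μ, 0 ≤ w ω * a ω := by
    filter_upwards [hw, ha] with ω hwω haω using by positivity
  have hwb : ∀ᵐ ω ∂μ, 0 ≤ (w ω)⁻¹ * b ω := by
    filter_upwards [hw, hb] with ω hwω hbω using by positivity
  have hu := memLp_rpow_inv_mul hpq.pos hk hwa hkm (hwm.mul ham) hA
  have hv := memLp_rpow_inv_mul hpq.symm.pos hk hwb hkm
    (hwm.aemeasurable.inv.aestronglyMeasurable.mul hbm) hB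
  have := hpq.ennrealOfReal
  refine (hu.integrable_mul hv).congr ?_
  filter_upwards [hk, hw] with ω hkω hwω
  exact (hpq.mul_mul_eq_rpow_inv_mul_mul_rpow_inv_mul hkω hwω.ne').symm

theorem integral_mul_mul_le_weighted (hpq : p.HolderConjugate q) (hk : ∀ᵐ ω ∂μ, 0 ≤ k ω)
    (hw : ∀ᵐ ω ∂μ, 0 < w ω) (ha : ∀ᵐ ω ∂μ, 0 ≤ a ω) (hb : ∀ᵐ ω ∂μ, 0 ≤ b ω)
    (hkm : AEStronglyMeasurable k μ) (hwm : AEStronglyMeasurable w μ)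
    (ham : AEStronglyMeasurable a μ) (hbm : AEStronglyMeasurable b μ)
    (hA : Integrable (fun ω => k ω * (w ω * a ω) ^ p) μ)
    (hB : Integrable (fun ω => k ω * ((w ω)⁻¹ * b ω) ^ q) μ) :
    ∫ ω, k ω * a ω * b ω ∂μ ≤
      (∫ ω, k ω * (w ω * a ω) ^ p ∂μ) ^ (1 / p) *
        (∫ ω, k ω * ((w ω)⁻¹ * b ω) ^ q ∂μ) ^ (1 / q) := by
  have hwa : ∀ᵐ ω ∂μ, 0 ≤ w ω * a ω := by
    filter_upwards [hw, ha] with ω hwω haω using by positivity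
  have hwb : ∀ᵐ ω ∂μ, 0 ≤ (w ω)⁻¹ * b ω := by
    filter_upwards [hw, hb] with ω hwω hbω using by positivity
  have hu := memLp_rpow_inv_mul hpq.pos hk hwa hkm (hwm.mul ham) hA
  have hv := memLp_rpow_inv_mul hpq.symm.pos hk hwb hkm
    (hwm.aemeasurable.inv.aestronglyMeasurable.mul hbm) hB
  have hsplit : (fun ω => k ω * a ω * b ω) =ᵐ[μ]
      fun ω => k ω ^ p⁻¹ * (w ω * a ω) * (k ω ^ q⁻¹ * ((w ω)⁻¹ * b ω)) := by
    filter_upwards [hk, hw] with ω hkω hwω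
    exact hpq.mul_mul_eq_rpow_inv_mul_mul_rpow_inv_mul hkω hwω.ne'
  have hpow (r : ℝ) (hr : r ≠ 0) (c : Ω → ℝ) (hc : ∀ᵐ ω ∂μ, 0 ≤ c ω) :
      ∫ ω, (k ω ^ r⁻¹ * c ω) ^ r ∂μ = ∫ ω, k ω * c ω ^ r ∂μ := by
    refine integral_congr_ae ?_
    filter_upwards [hk, hc] with ω hkω hcω using Real.rpow_inv_mul_rpow hkω hcω hr
  rw [integral_congr_ae hsplit, ← hpow p hpq.ne_zero _ hwa, ← hpow q hpq.symm.ne_zero _ hwb]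
  refine integral_mul_le_Lp_mul_Lq_of_nonneg hpq ?_ ?_ hu hv
  · filter_upwards [hk, hwa] with ω hkω hcω using by positivity
  · filter_upwards [hk, hwb] with ω hkω hcω using by positivity

end WeightedHolder

section Kernel

variable {X Y : Type*} [MeasurableSpace X] [MeasurableSpace Y] {μ : Measure X} {ν : Measure Y}
  [SFinite μ] [SFinite ν] {p q : ℝ} {K : X × Y → ℝ} {f φ : X → ℝ} {g ψ : Y → ℝ}

theorem integral_integral_kernel_le_weighted (hpq : p.HolderConjugate q)
    (hK : ∀ᵐ z ∂μ.prod ν, 0 ≤ K z) (hf : ∀ᵐ x ∂μ, 0 ≤ f x) (hg : ∀ᵐ y ∂ν, 0 ≤ g y)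
    (hφ : ∀ᵐ x ∂μ, 0 < φ x) (hψ : ∀ᵐ y ∂ν, 0 < ψ y)
    (hKm : AEStronglyMeasurable K (μ.prod ν)) (hfm : AEStronglyMeasurable f μ)
    (hgm : AEStronglyMeasurable g ν) (hφm : AEStronglyMeasurable φ μ)
    (hψm : AEStronglyMeasurable ψ ν)
    (hA : Integrable (fun z => φ z.1 ^ p * (K z * ψ z.2 ^ (-p)) * f z.1 ^ p) (μ.prod ν))
    (hB : Integrable (fun z => ψ z.2 ^ q * (K z * φ z.1 ^ (-q)) * g z.2 ^ q) (μ.prod ν)) :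
    ∫ y, ∫ x, K (x, y) * f x * g y ∂μ ∂ν ≤
      (∫ x, φ x ^ p * (∫ y, K (x, y) * ψ y ^ (-p) ∂ν) * f x ^ p ∂μ) ^ (1 / p) *
        (∫ y, ψ y ^ q * (∫ x, K (x, y) * φ x ^ (-q) ∂μ) * g y ^ q ∂ν) ^ (1 / q) := by
  have hf' := (Measure.quasiMeasurePreserving_fst (ν := ν)).ae hf
  have hφ' := (Measure.quasiMeasurePreserving_fst (ν := ν)).ae hφ
  have hg' := (Measure.quasiMeasurePreserving_snd (μ := μ)).ae hg
  have hψ' := (Measure.quasiMeasurePreserving_snd (μ := μ)).ae hψ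
  have hw : ∀ᵐ z ∂μ.prod ν, 0 < φ z.1 / ψ z.2 := by
    filter_upwards [hφ', hψ'] with z h₁ h₂ using div_pos h₁ h₂
  have hA' : (fun z => K z * (φ z.1 / ψ z.2 * f z.1) ^ p) =ᵐ[μ.prod ν]
      fun z => φ z.1 ^ p * (K z * ψ z.2 ^ (-p)) * f z.1 ^ p := by
    filter_upwards [hφ', hψ', hf'] with z h₁ h₂ h₃ using Real.mul_div_mul_rpow h₁ h₂ h₃
  have hB' : (fun z => K z * ((φ z.1 / ψ z.2)⁻¹ * g z.2) ^ q) =ᵐ[μ.prod ν]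
      fun z => ψ z.2 ^ q * (K z * φ z.1 ^ (-q)) * g z.2 ^ q := by
    filter_upwards [hφ', hψ', hg'] with z h₁ h₂ h₃
    rw [inv_div, Real.mul_div_mul_rpow h₂ h₁ h₃]
  have hm : AEStronglyMeasurable (fun z : X × Y => φ z.1 / ψ z.2) (μ.prod ν) :=
    (hφm.aemeasurable.comp_fst.div hψm.aemeasurable.comp_snd).aestronglyMeasurable
  rw [← integral_prod_symm _ (integrable_mul_mul_of_weighted hpq hK hw hf' hg' hKm hm
    hfm.comp_fst hgm.comp_snd (hA.congr hA'.symm) (hB.congr hB'.symm))]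
  calc _ ≤ _ := integral_mul_mul_le_weighted hpq hK hw hf' hg' hKm hm hfm.comp_fst hgm.comp_snd
        (hA.congr hA'.symm) (hB.congr hB'.symm)
    _ = _ := by
      rw [integral_congr_ae hA', integral_congr_ae hB', integral_prod _ hA,
        integral_prod_symm _ hB]
      simp only [integral_mul_const, integral_const_mul]

end Kernel

/-- Inequality (5) of Theorem 3.4, continuous case 𝕋 = ℝ. -/
theorem hardy_type_first_inequality_continuous
    (a b p q : ℝ) (K : ℝ × ℝ → ℝ) (f g φ ψ : ℝ → ℝ)
    (hab : a < b) (hp : 1 < p) (hpq : 1 / p + 1 / q = 1)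
    (hK : ContinuousOn K (Set.Icc a b ×ˢ Set.Icc a b))
    (hKnn : ∀ z ∈ Set.Icc a b ×ˢ Set.Icc a b, 0 ≤ K z)
    (hf : ContinuousOn f (Set.Icc a b)) (hfnn : ∀ t ∈ Set.Icc a b, 0 ≤ f t)
    (hg : ContinuousOn g (Set.Icc a b)) (hgnn : ∀ t ∈ Set.Icc a b, 0 ≤ g t)
    (hφ : ContinuousOn φ (Set.Icc a b)) (hφpos : ∀ t ∈ Set.Icc a b, 0 < φ t)
    (hψ : ContinuousOn ψ (Set.Icc a b)) (hψpos : ∀ t ∈ Set.Icc a b, 0 < ψ t)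
    (F G : ℝ → ℝ)
    (hF : ∀ x, F x = ∫ y in a..b, K (x, y) * ψ y ^ (-p))
    (hG : ∀ y, G y = ∫ x in a..b, K (x, y) * φ x ^ (-q)) :
    (∫ y in a..b, ∫ x in a..b, K (x, y) * f x * g y)
      ≤ (∫ x in a..b, φ x ^ p * F x * f x ^ p) ^ (1 / p) *
        (∫ y in a..b, ψ y ^ q * G y * g y ^ q) ^ (1 / q) := by
  have hconj : p.HolderConjugate q :=
    Real.holderConjugate_iff.2 ⟨hp, by simpa only [one_div] using hpq⟩
  have hI : MeasurableSet (Icc a b) := measurableSet_Icc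
  have hS : MeasurableSet (Icc a b ×ˢ Icc a b) := hI.prod hI
  have hμ : (volume.restrict (Icc a b)).prod (volume.restrict (Icc a b)) =
      volume.restrict (Icc a b ×ˢ Icc a b) := by
    rw [Measure.prod_restrict, ← Measure.volume_eq_prod]
  have hIcc (h : ℝ → ℝ) : ∫ t in a..b, h t = ∫ t in Icc a b, h t := by
    rw [intervalIntegral.integral_of_le hab.le, integral_Icc_eq_integral_Ioc]
  simp only [hIcc, hF, hG]
  refine integral_integral_kernel_le_weighted hconj (hμ ▸ ae_restrict_of_forall_mem hS hKnn)
    (ae_restrict_of_forall_mem hI hfnn) (ae_restrict_of_forall_mem hI hgnn)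
    (ae_restrict_of_forall_mem hI hφpos) (ae_restrict_of_forall_mem hI hψpos)
    (hμ ▸ hK.aestronglyMeasurable hS) (hf.aestronglyMeasurable hI) (hg.aestronglyMeasurable hI)
    (hφ.aestronglyMeasurable hI) (hψ.aestronglyMeasurable hI) ?_ ?_ <;>
  rw [hμ] <;> refine ContinuousOn.integrableOn_compact (isCompact_Icc.prod isCompact_Icc) ?_
  · exact (((hφ.comp_fst_prod _).rpow_const fun _ _ => Or.inr hconj.nonneg).mul
      (hK.mul ((hψ.comp_snd_prod _).rpow_const fun _ hz => Or.inl (hψpos _ hz.2).ne'))).mul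
      ((hf.comp_fst_prod _).rpow_const fun _ _ => Or.inr hconj.nonneg)
  · exact (((hψ.comp_snd_prod _).rpow_const fun _ _ => Or.inr hconj.symm.nonneg).mul
      (hK.mul ((hφ.comp_fst_prod _).rpow_const fun _ hz => Or.inl (hφpos _ hz.1).ne'))).mul
      ((hg.comp_snd_prod _).rpow_const fun _ _ => Or.inr hconj.symm.nonneg)
end

section
/- Let a < b be real numbers and let p > 1, q with 1/p + 1/q = 1. Let K : ℝ × ℝ → ℝ be continuous and positive on [a,b] × [a,b], let f : ℝ → ℝ be continuous and nonnegative on [a,b], and let φ, ψ : ℝ → ℝ be continuous and positive on [a,b]. Define F(x) = ∫_a^b K(x,y)·ψ(y)^(−p) dy and G(y) = ∫_a^b K(x,y)·φ(x)^(−q) dx. Then ∫_a^b G(y)^(1−p)·ψ(y)^(−p)·(∫_a^b K(x,y)·f(x) dx)^p dy ≤ ∫_a^b φ(x)^p·F(x)·f(x)^p dx. (This is the Hardy inequality (6) of Theorem 3.4 in the continuous case 𝕋 = ℝ.) -/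
/-!
For fixed `y`, Hölder's inequality applied to the factorization
`K(x,y) f(x) = (K(x,y)^{1/p} φ(x) f(x)) · (K(x,y)^{1/q} φ(x)⁻¹)` gives
`(∫ K(x,y) f(x) dx)^p ≤ G(y)^{p-1} ∫ K(x,y) φ(x)^p f(x)^p dx`.
Multiplying by `G(y)^{1-p} ψ(y)^{-p}`, integrating in `y` and exchanging the order of integration
turns `∫ K(x,y) ψ(y)^{-p} dy` into `F(x)`.
-/

open MeasureTheory Set

theorem ContinuousOn.memLp_restrict_of_isCompact {X E : Type*} [TopologicalSpace X] [T2Space X]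
    [MeasurableSpace X] [OpensMeasurableSpace X] [NormedAddCommGroup E] {μ : Measure X}
    [IsFiniteMeasureOnCompacts μ] {s : Set X} {f : X → E} (hs : IsCompact s)
    (hf : ContinuousOn f s) (r : ENNReal) : MemLp f r (μ.restrict s) := by
  have : IsFiniteMeasure (μ.restrict s) := isFiniteMeasure_restrict.2 hs.measure_lt_top.ne
  obtain ⟨C, hC⟩ := hs.exists_bound_of_continuousOn hf
  exact .of_bound (hf.aestronglyMeasurable_of_isCompact hs hs.measurableSet) C
    (ae_restrict_of_forall_mem hs.measurableSet hC)

theorem rpow_integral_mul_le_weighted {α : Type*} [MeasurableSpace α] {μ : Measure α}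
    {p q : ℝ} (hpq : p.HolderConjugate q) {k w f : α → ℝ} (hk : ∀ᵐ x ∂μ, 0 ≤ k x)
    (hw : ∀ᵐ x ∂μ, 0 < w x) (hf : ∀ᵐ x ∂μ, 0 ≤ f x)
    (hu : MemLp (fun x ↦ k x ^ p⁻¹ * (w x * f x)) (ENNReal.ofReal p) μ)
    (hv : MemLp (fun x ↦ k x ^ q⁻¹ * (w x)⁻¹) (ENNReal.ofReal q) μ) :
    (∫ x, k x * f x ∂μ) ^ p ≤
      (∫ x, k x * (w x ^ p * f x ^ p) ∂μ) * (∫ x, k x * w x ^ (-q) ∂μ) ^ (p - 1) := by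
  have holder := integral_mul_le_Lp_mul_Lq_of_nonneg hpq
    (by filter_upwards [hk, hw, hf] with x hk hw hf; positivity)
    (by filter_upwards [hk, hw] with x hk hw; positivity) hu hv
  have h_mul : ∫ x, k x ^ p⁻¹ * (w x * f x) * (k x ^ q⁻¹ * (w x)⁻¹) ∂μ = ∫ x, k x * f x ∂μ := by
    refine integral_congr_ae ?_
    filter_upwards [hk, hw] with x hk hw
    have hkk : k x ^ p⁻¹ * k x ^ q⁻¹ = k x := by
      rw [← Real.rpow_add' hk (by simp [hpq.inv_add_inv_eq_one]), hpq.inv_add_inv_eq_one,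
        Real.rpow_one]
    calc _ = k x ^ p⁻¹ * k x ^ q⁻¹ * (w x * (w x)⁻¹) * f x := by ring
      _ = k x * f x := by rw [hkk, mul_inv_cancel₀ hw.ne', mul_one]
  have h_left : ∫ x, (k x ^ p⁻¹ * (w x * f x)) ^ p ∂μ = ∫ x, k x * (w x ^ p * f x ^ p) ∂μ := by
    refine integral_congr_ae ?_
    filter_upwards [hk, hw, hf] with x hk hw hf
    rw [Real.mul_rpow (by positivity) (by positivity), ← Real.rpow_mul hk,
      inv_mul_cancel₀ hpq.pos.ne', Real.rpow_one, Real.mul_rpow hw.le hf]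
  have h_right : ∫ x, (k x ^ q⁻¹ * (w x)⁻¹) ^ q ∂μ = ∫ x, k x * w x ^ (-q) ∂μ := by
    refine integral_congr_ae ?_
    filter_upwards [hk, hw] with x hk hw
    rw [Real.mul_rpow (by positivity) (by positivity), ← Real.rpow_mul hk,
      inv_mul_cancel₀ hpq.symm.pos.ne', Real.rpow_one, Real.inv_rpow hw.le, Real.rpow_neg hw.le]
  rw [h_mul, h_left, h_right] at holder
  set A := ∫ x, k x * (w x ^ p * f x ^ p) ∂μ
  set G := ∫ x, k x * w x ^ (-q) ∂μ
  have hA : 0 ≤ A :=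
    integral_nonneg_of_ae (by filter_upwards [hk, hw, hf] with x hk hw hf; positivity)
  have hG : 0 ≤ G := integral_nonneg_of_ae (by filter_upwards [hk, hw] with x hk hw; positivity)
  have hKf : 0 ≤ ∫ x, k x * f x ∂μ :=
    integral_nonneg_of_ae (by filter_upwards [hk, hf] with x hk hf; positivity)
  calc (∫ x, k x * f x ∂μ) ^ p ≤ (A ^ (1 / p) * G ^ (1 / q)) ^ p :=
        Real.rpow_le_rpow hKf holder hpq.nonneg
    _ = A * G ^ (p - 1) := by
      rw [Real.mul_rpow (by positivity) (by positivity), ← Real.rpow_mul hA, ← Real.rpow_mul hG,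
        one_div_mul_cancel hpq.pos.ne', Real.rpow_one, one_div_mul_eq_div, hpq.div_conj_eq_sub_one]

theorem Real.rpow_one_sub_mul_le_of_le_mul_rpow_sub_one {p A G X : ℝ} (hp : p ≠ 1) (hG : 0 ≤ G)
    (hA : 0 ≤ A) (h : X ≤ A * G ^ (p - 1)) : G ^ (1 - p) * X ≤ A := by
  rcases hG.eq_or_lt with rfl | hG
  · rw [Real.zero_rpow (sub_ne_zero.2 hp.symm), zero_mul]
    exact hA
  · calc G ^ (1 - p) * X ≤ G ^ (1 - p) * (A * G ^ (p - 1)) := by gcongr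
      _ = A * G ^ (1 - p + (p - 1)) := by rw [Real.rpow_add hG]; ring
      _ = A := by norm_num

theorem IsCompact.rpow_setIntegral_le_weighted {X : Type*} [TopologicalSpace X] [T2Space X]
    [MeasurableSpace X] [OpensMeasurableSpace X] {μ : Measure X} [IsFiniteMeasureOnCompacts μ]
    {s : Set X} (hs : IsCompact s) {p q : ℝ} (hpq : p.HolderConjugate q) {k w f : X → ℝ}
    (hk : ContinuousOn k s) (hw : ContinuousOn w s) (hf : ContinuousOn f s)
    (hk0 : ∀ x ∈ s, 0 ≤ k x) (hw0 : ∀ x ∈ s, 0 < w x) (hf0 : ∀ x ∈ s, 0 ≤ f x) :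
    (∫ x in s, k x * w x ^ (-q) ∂μ) ^ (1 - p) * (∫ x in s, k x * f x ∂μ) ^ p ≤
      ∫ x in s, k x * (w x ^ p * f x ^ p) ∂μ := by
  have ae_of_forall {P : X → Prop} (h : ∀ x ∈ s, P x) : ∀ᵐ x ∂μ.restrict s, P x :=
    ae_restrict_of_forall_mem hs.measurableSet h
  refine Real.rpow_one_sub_mul_le_of_le_mul_rpow_sub_one hpq.lt.ne'
    (integral_nonneg_of_ae (ae_of_forall fun x hx ↦ ?_))
    (integral_nonneg_of_ae (ae_of_forall fun x hx ↦ ?_))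
    (rpow_integral_mul_le_weighted hpq (ae_of_forall hk0) (ae_of_forall hw0) (ae_of_forall hf0)
      ?_ ?_)
  · have := hk0 x hx; have := hw0 x hx; positivity
  · have := hk0 x hx; have := hw0 x hx; have := hf0 x hx; positivity
  · refine ContinuousOn.memLp_restrict_of_isCompact hs ?_ _
    exact (hk.rpow_const fun _ _ ↦ .inr (inv_nonneg.2 hpq.nonneg)).mul (hw.mul hf)
  · refine ContinuousOn.memLp_restrict_of_isCompact hs ?_ _
    exact (hk.rpow_const fun _ _ ↦ .inr (inv_nonneg.2 hpq.symm.nonneg)).mul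
      (hw.inv₀ fun x hx ↦ (hw0 x hx).ne')

theorem setIntegral_le_integral_integral_swap_of_le {X Y : Type*} [TopologicalSpace X]
    [T2Space X] [MeasurableSpace X] [OpensMeasurableSpace X] [TopologicalSpace Y]
    [SecondCountableTopology Y]
    [MeasurableSpace Y] [OpensMeasurableSpace Y] [T2Space Y] {μ : Measure X} {ν : Measure Y}
    [IsFiniteMeasureOnCompacts μ] [IsFiniteMeasureOnCompacts ν] [SFinite μ] [SFinite ν]
    {s : Set X} {t : Set Y} (hs : IsCompact s) (ht : IsCompact t) {g : Y → ℝ} {H : X × Y → ℝ}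
    (hH : ContinuousOn H (s ×ˢ t)) (hg : ∀ y ∈ t, 0 ≤ g y)
    (hgH : ∀ y ∈ t, g y ≤ ∫ x in s, H (x, y) ∂μ) :
    ∫ y in t, g y ∂ν ≤ ∫ x in s, ∫ y in t, H (x, y) ∂ν ∂μ := by
  have hH' : Integrable H ((μ.restrict s).prod (ν.restrict t)) := by
    rw [Measure.prod_restrict]
    exact hH.integrableOn_compact (hs.prod ht)
  rw [integral_integral_swap (f := fun x y ↦ H (x, y)) hH']
  exact integral_mono_of_nonneg (ae_restrict_of_forall_mem ht.measurableSet hg)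
    hH'.integral_prod_right (ae_restrict_of_forall_mem ht.measurableSet hgH)

section Hardy

variable {a b p q : ℝ} {K : ℝ × ℝ → ℝ} {f φ ψ : ℝ → ℝ}

theorem continuousOn_hardy_integrand (hp : 0 ≤ p) (hK : ContinuousOn K (Icc a b ×ˢ Icc a b))
    (hf : ContinuousOn f (Icc a b)) (hφ : ContinuousOn φ (Icc a b))
    (hφ0 : ∀ t ∈ Icc a b, 0 < φ t) (hψ : ContinuousOn ψ (Icc a b))
    (hψ0 : ∀ t ∈ Icc a b, 0 < ψ t) :
    ContinuousOn (fun z : ℝ × ℝ ↦ ψ z.2 ^ (-p) * (K z * (φ z.1 ^ p * f z.1 ^ p)))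
      (Icc a b ×ˢ Icc a b) := by
  have h_fst {g : ℝ → ℝ} (hg : ContinuousOn g (Icc a b)) :
      ContinuousOn (fun z : ℝ × ℝ ↦ g z.1) (Icc a b ×ˢ Icc a b) :=
    hg.comp continuous_fst.continuousOn fun _ hz ↦ hz.1
  have h_snd : ContinuousOn (fun z : ℝ × ℝ ↦ ψ z.2) (Icc a b ×ˢ Icc a b) :=
    hψ.comp continuous_snd.continuousOn fun _ hz ↦ hz.2
  exact (h_snd.rpow_const fun z hz ↦ .inl (hψ0 _ hz.2).ne').mul <| hK.mul <|
    ((h_fst hφ).rpow_const fun z hz ↦ .inl (hφ0 _ hz.1).ne').mul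
      ((h_fst hf).rpow_const fun _ _ ↦ .inr hp)

theorem hardy_slice_nonneg {y : ℝ} (hy : y ∈ Icc a b) (hK0 : ∀ z ∈ Icc a b ×ˢ Icc a b, 0 ≤ K z)
    (hf0 : ∀ t ∈ Icc a b, 0 ≤ f t) (hφ0 : ∀ t ∈ Icc a b, 0 ≤ φ t) (hψ0 : 0 ≤ ψ y) :
    0 ≤ (∫ x in Icc a b, K (x, y) * φ x ^ (-q)) ^ (1 - p) * ψ y ^ (-p) *
      (∫ x in Icc a b, K (x, y) * f x) ^ p := by
  have hG : 0 ≤ ∫ x in Icc a b, K (x, y) * φ x ^ (-q) := setIntegral_nonneg measurableSet_Icc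
    fun x hx ↦ by have := hK0 (x, y) ⟨hx, hy⟩; have := hφ0 x hx; positivity
  have hKf : 0 ≤ ∫ x in Icc a b, K (x, y) * f x := setIntegral_nonneg measurableSet_Icc
    fun x hx ↦ by have := hK0 (x, y) ⟨hx, hy⟩; have := hf0 x hx; positivity
  positivity

theorem hardy_slice_le {y : ℝ} (hy : y ∈ Icc a b) (hpq : p.HolderConjugate q)
    (hK : ContinuousOn K (Icc a b ×ˢ Icc a b)) (hK0 : ∀ z ∈ Icc a b ×ˢ Icc a b, 0 ≤ K z)
    (hf : ContinuousOn f (Icc a b)) (hf0 : ∀ t ∈ Icc a b, 0 ≤ f t)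
    (hφ : ContinuousOn φ (Icc a b)) (hφ0 : ∀ t ∈ Icc a b, 0 < φ t) (hψ0 : 0 ≤ ψ y) :
    (∫ x in Icc a b, K (x, y) * φ x ^ (-q)) ^ (1 - p) * ψ y ^ (-p) *
        (∫ x in Icc a b, K (x, y) * f x) ^ p ≤
      ∫ x in Icc a b, ψ y ^ (-p) * (K (x, y) * (φ x ^ p * f x ^ p)) := by
  rw [integral_const_mul, mul_right_comm, mul_comm _ (ψ y ^ (-p))]
  gcongr
  exact isCompact_Icc.rpow_setIntegral_le_weighted (μ := volume) (k := fun x ↦ K (x, y)) hpq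
    (hK.comp (continuous_id.prodMk continuous_const).continuousOn fun _ hx ↦ ⟨hx, hy⟩)
    hφ hf (fun x hx ↦ hK0 (x, y) ⟨hx, hy⟩) hφ0 hf0

end Hardy

/-- Hardy inequality (6) of Theorem 3.4, continuous case 𝕋 = ℝ. -/
theorem hardy_inequality_continuous
    (a b p q : ℝ) (K : ℝ × ℝ → ℝ) (f φ ψ : ℝ → ℝ)
    (hab : a < b) (hp : 1 < p) (hpq : 1 / p + 1 / q = 1)
    (hK : ContinuousOn K (Set.Icc a b ×ˢ Set.Icc a b))
    (hKpos : ∀ z ∈ Set.Icc a b ×ˢ Set.Icc a b, 0 < K z)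
    (hf : ContinuousOn f (Set.Icc a b)) (hfnn : ∀ t ∈ Set.Icc a b, 0 ≤ f t)
    (hφ : ContinuousOn φ (Set.Icc a b)) (hφpos : ∀ t ∈ Set.Icc a b, 0 < φ t)
    (hψ : ContinuousOn ψ (Set.Icc a b)) (hψpos : ∀ t ∈ Set.Icc a b, 0 < ψ t)
    (F G : ℝ → ℝ)
    (hF : ∀ x, F x = ∫ y in a..b, K (x, y) * ψ y ^ (-p))
    (hG : ∀ y, G y = ∫ x in a..b, K (x, y) * φ x ^ (-q)) :
    (∫ y in a..b, G y ^ (1 - p) * ψ y ^ (-p) * (∫ x in a..b, K (x, y) * f x) ^ p)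
      ≤ ∫ x in a..b, φ x ^ p * F x * f x ^ p := by
  have hpq' : p.HolderConjugate q :=
    Real.holderConjugate_iff.2 ⟨hp, by simpa only [one_div] using hpq⟩
  have hK0 z hz : 0 ≤ K z := (hKpos z hz).le
  simp only [intervalIntegral.integral_of_le hab.le, ← integral_Icc_eq_integral_Ioc] at hF hG ⊢
  calc _ ≤ ∫ x in Icc a b, ∫ y in Icc a b, ψ y ^ (-p) * (K (x, y) * (φ x ^ p * f x ^ p)) := by
        refine setIntegral_le_integral_integral_swap_of_le isCompact_Icc isCompact_Icc
          (continuousOn_hardy_integrand hpq'.nonneg hK hf hφ hφpos hψ hψpos)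
          (fun y hy ↦ ?_) (fun y hy ↦ ?_) <;> rw [hG]
        · exact hardy_slice_nonneg hy hK0 hfnn (fun t ht ↦ (hφpos t ht).le) (hψpos y hy).le
        · exact hardy_slice_le hy hpq' hK hK0 hf hfnn hφ hφpos (hψpos y hy).le
    _ = _ := by
        refine setIntegral_congr_fun measurableSet_Icc fun x _ ↦ ?_
        simp only [hF, ← integral_mul_const, ← integral_const_mul]
        congr 1 with y
        ring
end

section
/- Let a < b be real numbers and let p > 1, q with 1/p + 1/q = 1. Let K : ℝ × ℝ → ℝ be continuous and positive on [a,b] × [a,b], let f : ℝ → ℝ be continuous and nonnegative on [a,b], and let φ, ψ : ℝ → ℝ be continuous and positive on [a,b]. Define F(x) = ∫_a^b K(x,y)·ψ(y)^(−p) dy and G(y) = ∫_a^b K(x,y)·φ(x)^(−q) dx. Assume that for every continuous nonnegative function g : ℝ → ℝ the inequality ∫_a^b ∫_a^b K(x,y)·f(x)·g(y) dx dy ≤ (∫_a^b φ(x)^p·F(x)·f(x)^p dx)^(1/p) · (∫_a^b ψ(y)^q·G(y)·g(y)^q dy)^(1/q) holds. Then ∫_a^b G(y)^(1−p)·ψ(y)^(−p)·(∫_a^b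 K(x,y)·f(x) dx)^p dy ≤ ∫_a^b φ(x)^p·F(x)·f(x)^p dx. (One direction of the equivalence asserted in Theorem 3.4, continuous case.) -/
/-!
Test the assumed bilinear inequality with the function
`g = G ^ (1 - p) * ψ ^ (-p) * (∫ K(x, ·) f) ^ (p - 1)`, the equality case of Hölder's inequality.
For this `g` both the double integral and `∫ ψ ^ q * G * g ^ q` equal the left-hand side `J` of the
claim, so the hypothesis reads `J ≤ I ^ (1 / p) * J ^ (1 / q)` with `I` the right-hand side; dividing
by `J ^ (1 / q)` gives `J ^ (1 / p) ≤ I ^ (1 / p)`, i.e. `J ≤ I`.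
-/

open Set MeasureTheory intervalIntegral

section KernelIntegral

variable {a b : ℝ} {K : ℝ × ℝ → ℝ} {u : ℝ → ℝ}

/-- Extending `K` and `u` through `projIcc` reduces this to the parametric integral of a globally
continuous function. -/
lemma continuousOn_integral_kernel_mul (hab : a ≤ b) (hK : ContinuousOn K (Icc a b ×ˢ Icc a b))
    (hu : ContinuousOn u (Icc a b)) :
    ContinuousOn (fun y => ∫ x in a..b, K (x, y) * u x) (Icc a b) := by
  set P : ℝ → ℝ := fun x => projIcc a b hab x
  have hP : Continuous P := continuous_subtype_val.comp continuous_projIcc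
  have hPmem : ∀ x, P x ∈ Icc a b := fun x => (projIcc a b hab x).2
  have hPid : ∀ x ∈ Icc a b, P x = x := fun x hx => congrArg Subtype.val (projIcc_of_mem hab hx)
  have hext : Continuous (Function.uncurry fun y x => K (P x, P y) * u (P x)) :=
    show Continuous fun z : ℝ × ℝ => K (P z.2, P z.1) * u (P z.2) from
      (hK.comp_continuous (by fun_prop) fun _ => ⟨hPmem _, hPmem _⟩).mul
        (hu.comp_continuous (by fun_prop) fun _ => hPmem _)
  refine (continuous_parametric_intervalIntegral_of_continuous' hext a b).continuousOn.congr
    fun y hy => integral_congr fun x hx => ?_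
  rw [uIcc_of_le hab] at hx
  simp only [hPid x hx, hPid y hy]

lemma integral_kernel_mul_pos (hab : a < b) (hK : ContinuousOn K (Icc a b ×ˢ Icc a b))
    (hKpos : ∀ z ∈ Icc a b ×ˢ Icc a b, 0 < K z) (hu : ContinuousOn u (Icc a b))
    (hupos : ∀ t ∈ Icc a b, 0 < u t) {y : ℝ} (hy : y ∈ Icc a b) :
    0 < ∫ x in a..b, K (x, y) * u x := by
  have hKy : ContinuousOn (fun x => K (x, y)) (Icc a b) :=
    hK.comp (Continuous.continuousOn (by fun_prop)) fun x hx => ⟨hx, hy⟩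
  refine intervalIntegral_pos_of_pos_on ?_ (fun x hx => ?_) hab
  · exact (hKy.mul hu).intervalIntegrable_of_Icc hab.le
  · exact mul_pos (hKpos _ ⟨Ioo_subset_Icc_self hx, hy⟩) (hupos x (Ioo_subset_Icc_self hx))

end KernelIntegral

section TestWeight

/-- The value at `y` of the extremal test function, with `G = G y`, `ψ = ψ y` and
`A = ∫ x in a..b, K (x, y) * f x`. -/
noncomputable def hardyTestWeight (p G ψ A : ℝ) : ℝ := G ^ (1 - p) * ψ ^ (-p) * A ^ (p - 1)

variable {p q G ψ A : ℝ}

lemma hardyTestWeight_nonneg (hG : 0 ≤ G) (hψ : 0 ≤ ψ) (hA : 0 ≤ A) :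
    0 ≤ hardyTestWeight p G ψ A :=
  mul_nonneg (mul_nonneg (Real.rpow_nonneg hG _) (Real.rpow_nonneg hψ _)) (Real.rpow_nonneg hA _)

lemma mul_hardyTestWeight (hp : p ≠ 0) (hA : 0 ≤ A) :
    A * hardyTestWeight p G ψ A = G ^ (1 - p) * ψ ^ (-p) * A ^ p := by
  have hAp : A ^ p = A * A ^ (p - 1) := by
    rw [← Real.rpow_one_add' hA (by rwa [add_sub_cancel]), add_sub_cancel]
  rw [hardyTestWeight, hAp]; ring

lemma rpow_mul_hardyTestWeight_rpow (hpq : p.HolderConjugate q) (hG : 0 < G) (hψ : 0 < ψ)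
    (hA : 0 ≤ A) :
    ψ ^ q * G * hardyTestWeight p G ψ A ^ q = G ^ (1 - p) * ψ ^ (-p) * A ^ p := by
  have hpq' : p * q = p + q := hpq.mul_eq_add
  have hGq : G * G ^ ((1 - p) * q) = G ^ (1 - p) := by
    nth_rewrite 1 [← Real.rpow_one G]
    rw [← Real.rpow_add hG]; congr 1; linear_combination -hpq'
  have hψq : ψ ^ q * ψ ^ (-p * q) = ψ ^ (-p) := by
    rw [← Real.rpow_add hψ]; congr 1; linear_combination -hpq'
  rw [hardyTestWeight, Real.mul_rpow (by positivity) (Real.rpow_nonneg hA _),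
    Real.mul_rpow (by positivity) (by positivity), ← Real.rpow_mul hG.le, ← Real.rpow_mul hψ.le,
    ← Real.rpow_mul hA, hpq.sub_one_mul_conj, ← hGq, ← hψq]
  ring

end TestWeight

lemma ContinuousOn.hardyTestWeight {p : ℝ} {s : Set ℝ} {G ψ A : ℝ → ℝ} (hp : 1 ≤ p)
    (hG : ContinuousOn G s) (hψ : ContinuousOn ψ s) (hA : ContinuousOn A s)
    (hGpos : ∀ y ∈ s, 0 < G y) (hψpos : ∀ y ∈ s, 0 < ψ y) :
    ContinuousOn (fun y => hardyTestWeight p (G y) (ψ y) (A y)) s :=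
  ((hG.rpow_const fun y hy => .inl (hGpos y hy).ne').mul
    (hψ.rpow_const fun y hy => .inl (hψpos y hy).ne')).mul
    (hA.rpow_const fun _ _ => .inr (sub_nonneg.2 hp))

lemma ContinuousOn.exists_continuous_nonneg_eqOn_Icc {α : Type*} [TopologicalSpace α]
    [LinearOrder α] [OrderTopology α] {a b : α} {w : α → ℝ} (hab : a ≤ b)
    (hw : ContinuousOn w (Icc a b)) (hw0 : ∀ t ∈ Icc a b, 0 ≤ w t) :
    ∃ g : α → ℝ, Continuous g ∧ (∀ t, 0 ≤ g t) ∧ EqOn g w (Icc a b) :=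
  ⟨IccExtend hab ((Icc a b).domRestrict w), continuous_IccExtend_iff.2 hw.domRestrict,
    fun t => hw0 _ (projIcc a b hab t).2, fun _ ht => IccExtend_of_mem hab _ ht⟩

lemma Real.le_of_le_rpow_one_div_mul_rpow_one_div {p q I J : ℝ} (hpq : p.HolderConjugate q)
    (hI : 0 ≤ I) (h : J ≤ I ^ (1 / p) * J ^ (1 / q)) : J ≤ I := by
  rcases le_or_gt J 0 with hJ | hJpos
  · exact hJ.trans hI
  have hsplit : J ^ (1 / p) * J ^ (1 / q) = J := by
    rw [← Real.rpow_add hJpos, hpq.one_div_add_one_div, div_one, Real.rpow_one]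
  have hJp : J ^ (1 / p) ≤ I ^ (1 / p) :=
    le_of_mul_le_mul_right (by rwa [hsplit]) (Real.rpow_pos_of_pos hJpos _)
  exact (Real.rpow_le_rpow_iff hJpos.le hI hpq.one_div_pos).1 hJp

/-- Direction (5) ⟹ (6) of the equivalence in Theorem 3.4, continuous case 𝕋 = ℝ. -/
theorem hardy_equivalence_forward_continuous
    (a b p q : ℝ) (K : ℝ × ℝ → ℝ) (f φ ψ : ℝ → ℝ)
    (hab : a < b) (hp : 1 < p) (hpq : 1 / p + 1 / q = 1)
    (hK : ContinuousOn K (Set.Icc a b ×ˢ Set.Icc a b))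
    (hKpos : ∀ z ∈ Set.Icc a b ×ˢ Set.Icc a b, 0 < K z)
    (hf : ContinuousOn f (Set.Icc a b)) (hfnn : ∀ t ∈ Set.Icc a b, 0 ≤ f t)
    (hφ : ContinuousOn φ (Set.Icc a b)) (hφpos : ∀ t ∈ Set.Icc a b, 0 < φ t)
    (hψ : ContinuousOn ψ (Set.Icc a b)) (hψpos : ∀ t ∈ Set.Icc a b, 0 < ψ t)
    (F G : ℝ → ℝ)
    (hF : ∀ x, F x = ∫ y in a..b, K (x, y) * ψ y ^ (-p))
    (hG : ∀ y, G y = ∫ x in a..b, K (x, y) * φ x ^ (-q))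
    (h5 : ∀ g : ℝ → ℝ, Continuous g → (∀ t, 0 ≤ g t) →
      (∫ y in a..b, ∫ x in a..b, K (x, y) * f x * g y)
        ≤ (∫ x in a..b, φ x ^ p * F x * f x ^ p) ^ (1 / p) *
          (∫ y in a..b, ψ y ^ q * G y * g y ^ q) ^ (1 / q)) :
    (∫ y in a..b, G y ^ (1 - p) * ψ y ^ (-p) * (∫ x in a..b, K (x, y) * f x) ^ p)
      ≤ ∫ x in a..b, φ x ^ p * F x * f x ^ p := by
  have hpq' : p.HolderConjugate q :=
    Real.holderConjugate_iff.2 ⟨hp, by simpa only [one_div] using hpq⟩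
  set A : ℝ → ℝ := fun y => ∫ x in a..b, K (x, y) * f x
  have hA_nonneg : ∀ y ∈ Icc a b, 0 ≤ A y := fun y hy => integral_nonneg hab.le fun x hx =>
    mul_nonneg (hKpos _ ⟨hx, hy⟩).le (hfnn x hx)
  have hφq : ContinuousOn (fun x => φ x ^ (-q)) (Icc a b) :=
    hφ.rpow_const fun x hx => .inl (hφpos x hx).ne'
  have hG_cont : ContinuousOn G (Icc a b) :=
    (continuousOn_integral_kernel_mul hab.le hK hφq).congr fun y _ => hG y
  have hG_pos : ∀ y ∈ Icc a b, 0 < G y := fun y hy => hG y ▸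
    integral_kernel_mul_pos hab hK hKpos hφq (fun x hx => Real.rpow_pos_of_pos (hφpos x hx) _) hy
  obtain ⟨g, hg_cont, hg_nonneg, hg_eq⟩ := ContinuousOn.exists_continuous_nonneg_eqOn_Icc hab.le
    (hG_cont.hardyTestWeight hp.le hψ (continuousOn_integral_kernel_mul hab.le hK hf) hG_pos hψpos)
    fun y hy => hardyTestWeight_nonneg (hG_pos y hy).le (hψpos y hy).le (hA_nonneg y hy)
  have hdouble : (∫ y in a..b, ∫ x in a..b, K (x, y) * f x * g y)
      = ∫ y in a..b, G y ^ (1 - p) * ψ y ^ (-p) * A y ^ p := by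
    refine integral_congr fun y hy => ?_
    rw [uIcc_of_le hab.le] at hy
    simp only [intervalIntegral.integral_mul_const, hg_eq hy]
    exact mul_hardyTestWeight hpq'.ne_zero (hA_nonneg y hy)
  have hdual : (∫ y in a..b, ψ y ^ q * G y * g y ^ q)
      = ∫ y in a..b, G y ^ (1 - p) * ψ y ^ (-p) * A y ^ p := by
    refine integral_congr fun y hy => ?_
    rw [uIcc_of_le hab.le] at hy
    simp only [hg_eq hy]
    exact rpow_mul_hardyTestWeight_rpow hpq' (hG_pos y hy) (hψpos y hy) (hA_nonneg y hy)
  have hF_nonneg : ∀ x ∈ Icc a b, 0 ≤ F x := fun x hx => hF x ▸ integral_nonneg hab.le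
    fun y hy => mul_nonneg (hKpos _ ⟨hx, hy⟩).le (Real.rpow_nonneg (hψpos y hy).le _)
  have hI_nonneg : 0 ≤ ∫ x in a..b, φ x ^ p * F x * f x ^ p := integral_nonneg hab.le fun x hx =>
    mul_nonneg (mul_nonneg (Real.rpow_nonneg (hφpos x hx).le _) (hF_nonneg x hx))
      (Real.rpow_nonneg (hfnn x hx) _)
  have key := h5 g hg_cont hg_nonneg
  rw [hdouble, hdual] at key
  exact Real.le_of_le_rpow_one_div_mul_rpow_one_div hpq' hI_nonneg key
end

section
/- Let a < b be real numbers and let p > 1, q with 1/p + 1/q = 1. Let K : ℝ × ℝ → ℝ be continuous and positive on [a,b] × [a,b], let f, g : ℝ → ℝ be continuous and nonnegative on [a,b], and let φ, ψ : ℝ → ℝ be continuous and positive on [a,b]. Define F(x) = ∫_a^b K(x,y)·ψ(y)^(−p) dy and G(y) = ∫_a^b K(x,y)·φ(x)^(−q) dx. Assume that ∫_a^b G(y)^(1−p)·ψ(y)^(−p)·(∫_a^b K(x,y)·f(x) dx)^p dy ≤ ∫_a^b φ(x)^p·F(x)·f(x)^p dx. Then ∫_a^b ∫_a^b K(x,y)·f(x)·g(y)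 dx dy ≤ (∫_a^b φ(x)^p·F(x)·f(x)^p dx)^(1/p) · (∫_a^b ψ(y)^q·G(y)·g(y)^q dy)^(1/q). (The other direction of the equivalence asserted in Theorem 3.4, continuous case.) -/
/-!
Fix `y` and split `K(x,y) f(x) g(y)` after integrating in `x` as
`[G(y)^(-1/q) ψ(y)⁻¹ ∫ K(x,y) f(x) dx] · [ψ(y) G(y)^(1/q) g(y)]`.
Hölder's inequality in `y` bounds the double integral by the `L^p` norm of the first factor, which
is the left-hand side of the hypothesis since `-p/q = 1 - p`, times the `L^q` norm of the second,
which is `(∫ ψ^q G g^q)^(1/q)`. Positivity of `K` and `φ` makes `G` positive, so that the two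
factors multiply back to the integrand.
-/

open MeasureTheory Set intervalIntegral

theorem intervalIntegral.integral_congr_Icc_of_le {E : Type*} [NormedAddCommGroup E]
    [NormedSpace ℝ E] {a b : ℝ} (hab : a ≤ b) {f g : ℝ → E} (h : EqOn f g (Icc a b)) :
    ∫ t in a..b, f t = ∫ t in a..b, g t :=
  integral_congr (uIcc_of_le hab ▸ h)

theorem ContinuousOn.memLp_restrict {X E : Type*} [TopologicalSpace X] [MeasurableSpace X]
    [OpensMeasurableSpace X] [NormedAddCommGroup E] [SecondCountableTopologyEither X E]
    {μ : Measure X} [IsFiniteMeasureOnCompacts μ] {s : Set X} {f : X → E}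
    (hf : ContinuousOn f s) (hs : IsCompact s) (hms : MeasurableSet s) (r : ENNReal) :
    MemLp f r (μ.restrict s) := by
  have : IsFiniteMeasure (μ.restrict s) := isFiniteMeasure_restrict.2 hs.measure_lt_top.ne
  obtain ⟨C, hC⟩ := hs.exists_bound_of_continuousOn hf
  exact .of_bound (hf.aestronglyMeasurable hms) C ((ae_restrict_iff' hms).2 (.of_forall hC))

theorem intervalIntegral_mul_le_Lp_mul_Lq_of_nonneg {p q a b : ℝ} (hpq : p.HolderConjugate q)
    (hab : a ≤ b) {u v : ℝ → ℝ} (hu : ContinuousOn u (Icc a b))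
    (hv : ContinuousOn v (Icc a b))
    (hu0 : ∀ t ∈ Icc a b, 0 ≤ u t) (hv0 : ∀ t ∈ Icc a b, 0 ≤ v t) :
    ∫ t in a..b, u t * v t ≤
      (∫ t in a..b, u t ^ p) ^ (1 / p) * (∫ t in a..b, v t ^ q) ^ (1 / q) := by
  simp only [integral_of_le hab, ← integral_Icc_eq_integral_Ioc]
  exact integral_mul_le_Lp_mul_Lq_of_nonneg hpq
    ((ae_restrict_iff' measurableSet_Icc).2 (.of_forall hu0))
    ((ae_restrict_iff' measurableSet_Icc).2 (.of_forall hv0))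
    (hu.memLp_restrict isCompact_Icc measurableSet_Icc _)
    (hv.memLp_restrict isCompact_Icc measurableSet_Icc _)

theorem intervalIntegral_mul_le_weighted_Lp_mul_Lq_of_nonneg {p q a b : ℝ}
    (hpq : p.HolderConjugate q) (hab : a ≤ b) {u v ω : ℝ → ℝ}
    (hu : ContinuousOn u (Icc a b)) (hv : ContinuousOn v (Icc a b))
    (hω : ContinuousOn ω (Icc a b))
    (hu0 : ∀ t ∈ Icc a b, 0 ≤ u t) (hv0 : ∀ t ∈ Icc a b, 0 ≤ v t)
    (hω0 : ∀ t ∈ Icc a b, 0 < ω t) :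
    ∫ t in a..b, u t * v t ≤
      (∫ t in a..b, ω t ^ (-p) * u t ^ p) ^ (1 / p) *
        (∫ t in a..b, ω t ^ q * v t ^ q) ^ (1 / q) := by
  calc ∫ t in a..b, u t * v t = ∫ t in a..b, (ω t)⁻¹ * u t * (ω t * v t) :=
        integral_congr_Icc_of_le hab fun t ht => by field_simp [(hω0 t ht).ne']
    _ ≤ (∫ t in a..b, ((ω t)⁻¹ * u t) ^ p) ^ (1 / p) *
          (∫ t in a..b, (ω t * v t) ^ q) ^ (1 / q) :=
        intervalIntegral_mul_le_Lp_mul_Lq_of_nonneg hpq hab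
          ((hω.inv₀ fun t ht => (hω0 t ht).ne').mul hu) (hω.mul hv)
          (fun t ht => mul_nonneg (inv_nonneg.2 (hω0 t ht).le) (hu0 t ht))
          (fun t ht => mul_nonneg (hω0 t ht).le (hv0 t ht))
    _ = _ := by
        congr 2 <;> refine integral_congr_Icc_of_le hab fun t ht => ?_
        · rw [Real.mul_rpow (inv_nonneg.2 (hω0 t ht).le) (hu0 t ht),
            Real.inv_rpow (hω0 t ht).le, Real.rpow_neg (hω0 t ht).le]
        · rw [Real.mul_rpow (hω0 t ht).le (hv0 t ht)]

theorem intervalIntegral_mul_le_Lp_mul_Lq_of_weights {p q a b : ℝ} (hpq : p.HolderConjugate q)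
    (hab : a ≤ b) {u v ψ G : ℝ → ℝ} (hu : ContinuousOn u (Icc a b))
    (hv : ContinuousOn v (Icc a b)) (hψ : ContinuousOn ψ (Icc a b))
    (hG : ContinuousOn G (Icc a b)) (hu0 : ∀ t ∈ Icc a b, 0 ≤ u t)
    (hv0 : ∀ t ∈ Icc a b, 0 ≤ v t) (hψ0 : ∀ t ∈ Icc a b, 0 < ψ t)
    (hG0 : ∀ t ∈ Icc a b, 0 < G t) :
    ∫ t in a..b, u t * v t ≤
      (∫ t in a..b, G t ^ (1 - p) * ψ t ^ (-p) * u t ^ p) ^ (1 / p) *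
        (∫ t in a..b, ψ t ^ q * G t * v t ^ q) ^ (1 / q) := by
  have hω0 (t) (ht : t ∈ Icc a b) : 0 < ψ t * G t ^ (1 / q) :=
    mul_pos (hψ0 t ht) (Real.rpow_pos_of_pos (hG0 t ht) _)
  refine (intervalIntegral_mul_le_weighted_Lp_mul_Lq_of_nonneg (ω := fun t => ψ t * G t ^ (1 / q))
    hpq hab hu hv
    (hψ.mul (hG.rpow_const fun t ht => .inl (hG0 t ht).ne')) hu0 hv0 hω0).trans_eq ?_
  congr 2 <;> refine integral_congr_Icc_of_le hab fun t ht => ?_ <;>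
    rw [Real.mul_rpow (hψ0 t ht).le (Real.rpow_nonneg (hG0 t ht).le _),
      ← Real.rpow_mul (hG0 t ht).le]
  · rw [mul_neg, one_div_mul_eq_div, hpq.div_conj_eq_sub_one, neg_sub]
    ring
  · rw [one_div_mul_cancel hpq.symm.ne_zero, Real.rpow_one]

theorem continuousOn_intervalIntegral_of_continuousOn_prod {a b c d : ℝ} (hab : a ≤ b)
    (hcd : c ≤ d) {k : ℝ × ℝ → ℝ} (hk : ContinuousOn k (Icc a b ×ˢ Icc c d)) :
    ContinuousOn (fun y => ∫ x in a..b, k (x, y)) (Icc c d) := by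
  set k' : ℝ → ℝ → ℝ := fun y x => k (projIcc a b hab x, projIcc c d hcd y)
  have hk' : Continuous (Function.uncurry k') :=
    hk.comp_continuous
      ((continuous_subtype_val.comp (continuous_projIcc.comp continuous_snd)).prodMk
        (continuous_subtype_val.comp (continuous_projIcc.comp continuous_fst)))
      fun _ => ⟨Subtype.mem _, Subtype.mem _⟩
  refine (continuous_parametric_intervalIntegral_of_continuous' hk' a b).continuousOn.congr
    fun y hy => integral_congr_Icc_of_le hab fun x hx => ?_
  simp [k', projIcc_of_mem _ hx, projIcc_of_mem _ hy]

section Kernel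

variable {a b c d : ℝ} {K : ℝ × ℝ → ℝ} {h : ℝ → ℝ}

theorem continuousOn_intervalIntegral_kernel_mul (hab : a ≤ b) (hcd : c ≤ d)
    (hK : ContinuousOn K (Icc a b ×ˢ Icc c d)) (hh : ContinuousOn h (Icc a b)) :
    ContinuousOn (fun y => ∫ x in a..b, K (x, y) * h x) (Icc c d) :=
  continuousOn_intervalIntegral_of_continuousOn_prod hab hcd
    (hK.mul (hh.comp continuousOn_fst fun _ hz => hz.1))

theorem intervalIntegral_kernel_mul_nonneg (hab : a ≤ b)
    (hK : ∀ z ∈ Icc a b ×ˢ Icc c d, 0 ≤ K z) (hh : ∀ x ∈ Icc a b, 0 ≤ h x) {y : ℝ}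
    (hy : y ∈ Icc c d) : 0 ≤ ∫ x in a..b, K (x, y) * h x :=
  integral_nonneg hab fun x hx => mul_nonneg (hK (x, y) ⟨hx, hy⟩) (hh x hx)

theorem intervalIntegral_kernel_mul_pos (hab : a < b) (hK : ContinuousOn K (Icc a b ×ˢ Icc c d))
    (hKpos : ∀ z ∈ Icc a b ×ˢ Icc c d, 0 < K z) (hh : ContinuousOn h (Icc a b))
    (hhpos : ∀ x ∈ Icc a b, 0 < h x) {y : ℝ} (hy : y ∈ Icc c d) :
    0 < ∫ x in a..b, K (x, y) * h x := by
  have hKy : ContinuousOn (fun x => K (x, y)) (Icc a b) :=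
    hK.comp (continuousOn_id.prodMk continuousOn_const) fun _ hx => ⟨hx, hy⟩
  exact intervalIntegral_pos_of_pos_on ((hKy.mul hh).intervalIntegrable_of_Icc hab.le)
    (fun x hx => mul_pos (hKpos (x, y) ⟨Ioo_subset_Icc_self hx, hy⟩)
      (hhpos x (Ioo_subset_Icc_self hx))) hab

end Kernel

theorem hardy_equivalence_backward_continuous_general
    (a b p q : ℝ) (K : ℝ × ℝ → ℝ) (f g φ ψ : ℝ → ℝ)
    (hab : a < b) (hp : 1 < p) (hpq : 1 / p + 1 / q = 1)
    (hK : ContinuousOn K (Set.Icc a b ×ˢ Set.Icc a b))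
    (hKpos : ∀ z ∈ Set.Icc a b ×ˢ Set.Icc a b, 0 < K z)
    (hf : ContinuousOn f (Set.Icc a b)) (hfnn : ∀ t ∈ Set.Icc a b, 0 ≤ f t)
    (hg : ContinuousOn g (Set.Icc a b)) (hgnn : ∀ t ∈ Set.Icc a b, 0 ≤ g t)
    (hφ : ContinuousOn φ (Set.Icc a b)) (hφpos : ∀ t ∈ Set.Icc a b, 0 < φ t)
    (hψ : ContinuousOn ψ (Set.Icc a b)) (hψpos : ∀ t ∈ Set.Icc a b, 0 < ψ t)
    (F G : ℝ → ℝ)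
    (hG : ∀ y, G y = ∫ x in a..b, K (x, y) * φ x ^ (-q))
    (h6 : (∫ y in a..b, G y ^ (1 - p) * ψ y ^ (-p) * (∫ x in a..b, K (x, y) * f x) ^ p)
      ≤ ∫ x in a..b, φ x ^ p * F x * f x ^ p) :
    (∫ y in a..b, ∫ x in a..b, K (x, y) * f x * g y)
      ≤ (∫ x in a..b, φ x ^ p * F x * f x ^ p) ^ (1 / p) *
        (∫ y in a..b, ψ y ^ q * G y * g y ^ q) ^ (1 / q) := by
  have hpq : p.HolderConjugate q := Real.holderConjugate_iff.2 ⟨hp, by simpa using hpq⟩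
  have hφq : ContinuousOn (fun x => φ x ^ (-q)) (Icc a b) :=
    hφ.rpow_const fun x hx => .inl (hφpos x hx).ne'
  have hGc : ContinuousOn G (Icc a b) :=
    (continuousOn_intervalIntegral_kernel_mul hab.le hab.le hK hφq).congr fun y _ => hG y
  have hG0 (y) (hy : y ∈ Icc a b) : 0 < G y := hG y ▸ intervalIntegral_kernel_mul_pos hab hK
    hKpos hφq (fun x hx => Real.rpow_pos_of_pos (hφpos x hx) _) hy
  have hE0 (y) (hy : y ∈ Icc a b) :=
    intervalIntegral_kernel_mul_nonneg hab.le (fun z hz => (hKpos z hz).le) hfnn hy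
  calc (∫ y in a..b, ∫ x in a..b, K (x, y) * f x * g y)
        = ∫ y in a..b, (∫ x in a..b, K (x, y) * f x) * g y :=
        integral_congr fun y _ => integral_mul_const _ _
    _ ≤ _ := intervalIntegral_mul_le_Lp_mul_Lq_of_weights hpq hab.le
        (continuousOn_intervalIntegral_kernel_mul hab.le hab.le hK hf) hg hψ
        hGc hE0 hgnn hψpos hG0
    _ ≤ _ := by
        gcongr
        · exact Real.rpow_nonneg (integral_nonneg hab.le fun y hy => by
            have := hG0 y hy; have := hψpos y hy; have := hgnn y hy; positivity) _
        · exact integral_nonneg hab.le fun y hy => by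
            have := hG0 y hy; have := hψpos y hy; have := hE0 y hy; positivity

/-- Direction (6) ⟹ (5) of the equivalence in Theorem 3.4, continuous case 𝕋 = ℝ. -/
theorem hardy_equivalence_backward_continuous
    (a b p q : ℝ) (K : ℝ × ℝ → ℝ) (f g φ ψ : ℝ → ℝ)
    (hab : a < b) (hp : 1 < p) (hpq : 1 / p + 1 / q = 1)
    (hK : ContinuousOn K (Set.Icc a b ×ˢ Set.Icc a b))
    (hKpos : ∀ z ∈ Set.Icc a b ×ˢ Set.Icc a b, 0 < K z)
    (hf : ContinuousOn f (Set.Icc a b)) (hfnn : ∀ t ∈ Set.Icc a b, 0 ≤ f t)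
    (hg : ContinuousOn g (Set.Icc a b)) (hgnn : ∀ t ∈ Set.Icc a b, 0 ≤ g t)
    (hφ : ContinuousOn φ (Set.Icc a b)) (hφpos : ∀ t ∈ Set.Icc a b, 0 < φ t)
    (hψ : ContinuousOn ψ (Set.Icc a b)) (hψpos : ∀ t ∈ Set.Icc a b, 0 < ψ t)
    (F G : ℝ → ℝ)
    (hF : ∀ x, F x = ∫ y in a..b, K (x, y) * ψ y ^ (-p))
    (hG : ∀ y, G y = ∫ x in a..b, K (x, y) * φ x ^ (-q))
    (h6 : (∫ y in a..b, G y ^ (1 - p) * ψ y ^ (-p) * (∫ x in a..b, K (x, y) * f x) ^ p)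
      ≤ ∫ x in a..b, φ x ^ p * F x * f x ^ p) :
    (∫ y in a..b, ∫ x in a..b, K (x, y) * f x * g y)
      ≤ (∫ x in a..b, φ x ^ p * F x * f x ^ p) ^ (1 / p) *
        (∫ y in a..b, ψ y ^ q * G y * g y ^ q) ^ (1 / q) :=
  hardy_equivalence_backward_continuous_general a b p q K f g φ ψ hab hp hpq hK hKpos hf hfnn hg
    hgnn hφ hφpos hψ hψpos F G hG h6
end

section
/- Let a < b be real numbers and let p > 1, q with 1/p + 1/q = 1. Let h, f, g : ℝ → ℝ be continuous and nonnegative on [a,b] and let φ, ψ : ℝ → ℝ be continuous and positive on [a,b]. Define H(y) = h(y)·ψ(y)^(−p). Then ∫_a^b ( ∫_a^y h(y)·f(x)·g(y) dx ) dy ≤ (∫_a^b φ(x)^p·f(x)^p·(∫_x^b H(y) dy) dx)^(1/p) · (∫_a^b ψ(y)^q·g(y)^q·h(y)·(∫_a^y φ(x)^(−q) dx) dy)^(1/q). (First inequality of Corollary 3.6, continuous case 𝕋 = ℝ, obtained from Theorem 3.4 with the triangular kernel K(x,y) = h(y) for x ≤ y, K(x,y) = 0 for x > y.) -/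
/-!
For fixed `y`, Hölder's inequality with the weights `φ` and `φ⁻¹` gives
`∫_a^y f ≤ (∫_a^y φ^p f^p)^(1/p) (∫_a^y φ^(-q))^(1/q)`. Writing
`h g = (h ψ^(-p))^(1/p) (ψ^q g^q h)^(1/q)` and applying Hölder again, now in `y`, bounds the
left side by `(∫_a^b H(y) ∫_a^y φ^p f^p)^(1/p) (∫_a^b ψ^q g^q h ∫_a^y φ^(-q))^(1/q)`;
exchanging the order of integration over the triangle `a ≤ x ≤ y ≤ b` gives the first factor
its stated form.
-/

open MeasureTheory Set intervalIntegral

lemma ContinuousOn.memLp_restrict_Ioc {F : ℝ → ℝ} {c d : ℝ} (hF : ContinuousOn F (Icc c d))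
    (r : ENNReal) : MemLp F r (volume.restrict (Ioc c d)) := by
  obtain ⟨C, hC⟩ := isCompact_Icc.exists_bound_of_continuousOn hF
  refine (memLp_top_of_bound ((hF.mono Ioc_subset_Icc_self).aestronglyMeasurable
    measurableSet_Ioc) C ?_).mono_exponent le_top
  filter_upwards [ae_restrict_mem measurableSet_Ioc] with x hx
  exact hC x (Ioc_subset_Icc_self hx)

lemma integral_rpow_mul_rpow_le {p q c d : ℝ} (hcd : c ≤ d) (hpq : p.HolderConjugate q)
    {F G : ℝ → ℝ} (hF : ContinuousOn F (Icc c d)) (hG : ContinuousOn G (Icc c d))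
    (hF0 : ∀ t ∈ Icc c d, 0 ≤ F t) (hG0 : ∀ t ∈ Icc c d, 0 ≤ G t) :
    ∫ t in c..d, F t ^ (1 / p) * G t ^ (1 / q)
      ≤ (∫ t in c..d, F t) ^ (1 / p) * (∫ t in c..d, G t) ^ (1 / q) := by
  have holder := integral_mul_le_Lp_mul_Lq_of_nonneg (μ := volume.restrict (Ioc c d)) hpq
    (ae_restrict_of_forall_mem measurableSet_Ioc fun t ht =>
      Real.rpow_nonneg (hF0 t (Ioc_subset_Icc_self ht)) _)
    (ae_restrict_of_forall_mem measurableSet_Ioc fun t ht =>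
      Real.rpow_nonneg (hG0 t (Ioc_subset_Icc_self ht)) _)
    ((hF.rpow_const fun _ _ => Or.inr (one_div_nonneg.2 hpq.nonneg)).memLp_restrict_Ioc _)
    ((hG.rpow_const fun _ _ => Or.inr (one_div_nonneg.2 hpq.symm.nonneg)).memLp_restrict_Ioc _)
  rw [← integral_of_le hcd, ← integral_of_le hcd, ← integral_of_le hcd] at holder
  have hFeq : ∫ t in c..d, (F t ^ (1 / p)) ^ p = ∫ t in c..d, F t :=
    integral_congr fun t ht => by
      rw [uIcc_of_le hcd] at ht
      rw [← Real.rpow_mul (hF0 t ht), one_div_mul_cancel hpq.ne_zero, Real.rpow_one]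
  have hGeq : ∫ t in c..d, (G t ^ (1 / q)) ^ q = ∫ t in c..d, G t :=
    integral_congr fun t ht => by
      rw [uIcc_of_le hcd] at ht
      rw [← Real.rpow_mul (hG0 t ht), one_div_mul_cancel hpq.symm.ne_zero, Real.rpow_one]
  rwa [hFeq, hGeq] at holder

lemma ContinuousOn.hasDerivAt_integral_of_mem_Ioo {w : ℝ → ℝ} {a b c x : ℝ}
    (hw : ContinuousOn w (Icc a b)) (hc : c ∈ Icc a b) (hx : x ∈ Ioo a b) :
    HasDerivAt (fun t => ∫ s in c..t, w s) (w x) x :=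
  integral_hasDerivAt_right
    ((hw.mono (uIcc_subset_Icc hc (Ioo_subset_Icc_self hx))).intervalIntegrable)
    ((hw.mono Ioo_subset_Icc_self).stronglyMeasurableAtFilter isOpen_Ioo x hx)
    (hw.continuousAt (Icc_mem_nhds hx.1 hx.2))

lemma ContinuousOn.primitive_Icc {a b : ℝ} (hab : a ≤ b) {w : ℝ → ℝ}
    (hw : ContinuousOn w (Icc a b)) : ContinuousOn (fun y => ∫ x in a..y, w x) (Icc a b) := by
  rw [← uIcc_of_le hab] at hw ⊢
  exact continuousOn_primitive_interval hw.integrableOn_Icc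

/-- Fubini over the triangle `a ≤ x ≤ y ≤ b`, proved by integration by parts. -/
lemma integral_primitive_mul_eq {a b : ℝ} (hab : a ≤ b) {u v : ℝ → ℝ}
    (hu : ContinuousOn u (Icc a b)) (hv : ContinuousOn v (Icc a b)) :
    ∫ y in a..b, (∫ x in a..y, u x) * v y = ∫ x in a..b, u x * ∫ y in x..b, v y := by
  have hab' : uIcc a b = Icc a b := uIcc_of_le hab
  have tail_eq : (fun t => ∫ y in t..b, v y) = fun t => -∫ y in b..t, v y :=
    funext fun t => integral_symm _ _
  have ibp := integral_mul_deriv_eq_deriv_mul_of_hasDerivAt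
    (u := fun t => ∫ x in a..t, u x) (v := fun t => ∫ y in t..b, v y) (v' := fun y => -v y)
    (hab' ▸ hu.primitive_Icc hab)
    (by rw [tail_eq]; exact (continuousOn_primitive_interval'
      (hv.intervalIntegrable_of_Icc hab) right_mem_uIcc).neg)
    (fun x hx => by
      rw [min_eq_left hab, max_eq_right hab] at hx
      exact hu.hasDerivAt_integral_of_mem_Ioo (left_mem_Icc.2 hab) hx)
    (fun x hx => by
      rw [min_eq_left hab, max_eq_right hab] at hx
      rw [tail_eq]
      exact (hv.hasDerivAt_integral_of_mem_Ioo (right_mem_Icc.2 hab) hx).neg)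
    (hu.intervalIntegrable_of_Icc hab) (hv.neg.intervalIntegrable_of_Icc hab)
  simp only [integral_same, mul_neg, intervalIntegral.integral_neg, zero_mul, mul_zero,
    sub_zero] at ibp
  linarith

lemma integral_le_weighted_holder {p q c d : ℝ} (hcd : c ≤ d) (hpq : p.HolderConjugate q)
    {f φ : ℝ → ℝ} (hf : ContinuousOn f (Icc c d)) (hφ : ContinuousOn φ (Icc c d))
    (hf0 : ∀ t ∈ Icc c d, 0 ≤ f t) (hφ0 : ∀ t ∈ Icc c d, 0 < φ t) :
    ∫ t in c..d, f t ≤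
      (∫ t in c..d, φ t ^ p * f t ^ p) ^ (1 / p) * (∫ t in c..d, φ t ^ (-q)) ^ (1 / q) := by
  calc ∫ t in c..d, f t
      = ∫ t in c..d, (φ t ^ p * f t ^ p) ^ (1 / p) * (φ t ^ (-q)) ^ (1 / q) :=
        integral_congr fun t ht => by
          rw [uIcc_of_le hcd] at ht
          have hφt := hφ0 t ht
          rw [← Real.mul_rpow hφt.le (hf0 t ht), one_div, one_div,
            Real.rpow_rpow_inv (mul_nonneg hφt.le (hf0 t ht)) hpq.ne_zero,
            ← Real.rpow_mul hφt.le, neg_mul, mul_inv_cancel₀ hpq.symm.ne_zero,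
            Real.rpow_neg_one, mul_comm (φ t), mul_inv_cancel_right₀ hφt.ne']
    _ ≤ _ := integral_rpow_mul_rpow_le hcd hpq
        ((hφ.rpow_const fun _ _ => Or.inr hpq.nonneg).mul
          (hf.rpow_const fun _ _ => Or.inr hpq.nonneg))
        (hφ.rpow_const fun t ht => Or.inl (hφ0 t ht).ne')
        (fun t ht => by have := hφ0 t ht; have := hf0 t ht; positivity)
        (fun t ht => (Real.rpow_pos_of_pos (hφ0 t ht) _).le)

lemma rpow_one_div_mul_rpow_one_div_eq {p q h g ψ P Q : ℝ} (hpq : p.HolderConjugate q)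
    (hh : 0 ≤ h) (hg : 0 ≤ g) (hψ : 0 < ψ) (hP : 0 ≤ P) (hQ : 0 ≤ Q) :
    (h * ψ ^ (-p) * P) ^ (1 / p) * (ψ ^ q * g ^ q * h * Q) ^ (1 / q)
      = h * g * (P ^ (1 / p) * Q ^ (1 / q)) := by
  have hψp : (ψ ^ (-p)) ^ (1 / p) = ψ⁻¹ := by
    rw [← Real.rpow_mul hψ.le, neg_mul, mul_one_div_cancel hpq.ne_zero, Real.rpow_neg_one]
  have hq : ∀ {x : ℝ}, 0 ≤ x → (x ^ q) ^ (1 / q) = x := fun hx => by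
    rw [one_div, Real.rpow_rpow_inv hx hpq.symm.ne_zero]
  have hsplit : h ^ (1 / p) * h ^ (1 / q) = h := by
    rw [← Real.rpow_add' hh (by simp [hpq.inv_add_inv_eq_one]), one_div, one_div,
      hpq.inv_add_inv_eq_one, Real.rpow_one]
  rw [Real.mul_rpow (by positivity) hP, Real.mul_rpow hh (by positivity), hψp,
    Real.mul_rpow (by positivity) hQ, Real.mul_rpow (by positivity) hh,
    Real.mul_rpow (by positivity) (by positivity), hq hψ.le, hq hg]
  field_simp
  linear_combination (g * P ^ (1 / p) * Q ^ (1 / q)) * hsplit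

lemma mul_mul_integral_le_weighted_holder {p q c d h g ψ : ℝ} (hcd : c ≤ d)
    (hpq : p.HolderConjugate q) {f φ : ℝ → ℝ} (hf : ContinuousOn f (Icc c d))
    (hφ : ContinuousOn φ (Icc c d)) (hf0 : ∀ t ∈ Icc c d, 0 ≤ f t)
    (hφ0 : ∀ t ∈ Icc c d, 0 < φ t) (hh : 0 ≤ h) (hg : 0 ≤ g) (hψ : 0 < ψ) :
    h * g * ∫ t in c..d, f t
      ≤ (h * ψ ^ (-p) * ∫ t in c..d, φ t ^ p * f t ^ p) ^ (1 / p) *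
        (ψ ^ q * g ^ q * h * ∫ t in c..d, φ t ^ (-q)) ^ (1 / q) := by
  rw [rpow_one_div_mul_rpow_one_div_eq hpq hh hg hψ
    (integral_nonneg hcd fun t ht => by have := hφ0 t ht; have := hf0 t ht; positivity)
    (integral_nonneg hcd fun t ht => (Real.rpow_pos_of_pos (hφ0 t ht) _).le)]
  exact mul_le_mul_of_nonneg_left (integral_le_weighted_holder hcd hpq hf hφ hf0 hφ0)
    (mul_nonneg hh hg)

lemma integral_mul_mul_integral_le {a b p q : ℝ} (hab : a ≤ b) (hpq : p.HolderConjugate q)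
    {h f g φ ψ : ℝ → ℝ}
    (hh : ContinuousOn h (Icc a b)) (hh0 : ∀ t ∈ Icc a b, 0 ≤ h t)
    (hf : ContinuousOn f (Icc a b)) (hf0 : ∀ t ∈ Icc a b, 0 ≤ f t)
    (hg : ContinuousOn g (Icc a b)) (hg0 : ∀ t ∈ Icc a b, 0 ≤ g t)
    (hφ : ContinuousOn φ (Icc a b)) (hφ0 : ∀ t ∈ Icc a b, 0 < φ t)
    (hψ : ContinuousOn ψ (Icc a b)) (hψ0 : ∀ t ∈ Icc a b, 0 < ψ t) :
    ∫ y in a..b, h y * g y * ∫ x in a..y, f x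
      ≤ (∫ y in a..b, h y * ψ y ^ (-p) * ∫ x in a..y, φ x ^ p * f x ^ p) ^ (1 / p) *
        (∫ y in a..b, ψ y ^ q * g y ^ q * h y * ∫ x in a..y, φ x ^ (-q)) ^ (1 / q) := by
  have sub : ∀ y ∈ Icc a b, Icc a y ⊆ Icc a b := fun y hy => Icc_subset_Icc_right hy.2
  have hP0 : ∀ y ∈ Icc a b, 0 ≤ ∫ x in a..y, φ x ^ p * f x ^ p := fun y hy =>
    integral_nonneg hy.1 fun t ht => by
      have := hφ0 t (sub y hy ht); have := hf0 t (sub y hy ht); positivity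
  have hQ0 : ∀ y ∈ Icc a b, 0 ≤ ∫ x in a..y, φ x ^ (-q) := fun y hy =>
    integral_nonneg hy.1 fun t ht => (Real.rpow_pos_of_pos (hφ0 t (sub y hy ht)) _).le
  have hψ' : ∀ r : ℝ, ContinuousOn (fun t => ψ t ^ r) (Icc a b) := fun _ =>
    hψ.rpow_const fun t ht => Or.inl (hψ0 t ht).ne'
  have hF : ContinuousOn (fun y => h y * ψ y ^ (-p) * ∫ x in a..y, φ x ^ p * f x ^ p)
      (Icc a b) :=
    (hh.mul (hψ' _)).mul <| ContinuousOn.primitive_Icc hab <|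
      (hφ.rpow_const fun _ _ => Or.inr hpq.nonneg).mul
        (hf.rpow_const fun _ _ => Or.inr hpq.nonneg)
  have hG : ContinuousOn (fun y => ψ y ^ q * g y ^ q * h y * ∫ x in a..y, φ x ^ (-q))
      (Icc a b) :=
    (((hψ' _).mul (hg.rpow_const fun _ _ => Or.inr hpq.symm.nonneg)).mul hh).mul <|
      ContinuousOn.primitive_Icc hab (hφ.rpow_const fun t ht => Or.inl (hφ0 t ht).ne')
  calc ∫ y in a..b, h y * g y * ∫ x in a..y, f x
      ≤ ∫ y in a..b, (h y * ψ y ^ (-p) * ∫ x in a..y, φ x ^ p * f x ^ p) ^ (1 / p) *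
          (ψ y ^ q * g y ^ q * h y * ∫ x in a..y, φ x ^ (-q)) ^ (1 / q) :=
        integral_mono_on hab
          (((hh.mul hg).mul (hf.primitive_Icc hab)).intervalIntegrable_of_Icc hab)
          (((hF.rpow_const fun _ _ => Or.inr (one_div_nonneg.2 hpq.nonneg)).mul
            (hG.rpow_const fun _ _ => Or.inr (one_div_nonneg.2 hpq.symm.nonneg))
            ).intervalIntegrable_of_Icc hab)
          fun y hy => mul_mul_integral_le_weighted_holder hy.1 hpq (hf.mono (sub y hy))
            (hφ.mono (sub y hy)) (fun t ht => hf0 t (sub y hy ht))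
            (fun t ht => hφ0 t (sub y hy ht)) (hh0 y hy) (hg0 y hy) (hψ0 y hy)
    _ ≤ _ := integral_rpow_mul_rpow_le hab hpq hF hG
        (fun y hy => by have := hh0 y hy; have := hψ0 y hy; have := hP0 y hy; positivity)
        (fun y hy => by
          have := hh0 y hy; have := hg0 y hy; have := hψ0 y hy; have := hQ0 y hy; positivity)

/-- First inequality of Corollary 3.6, continuous case 𝕋 = ℝ. -/
theorem corollary36_first_inequality_continuous
    (a b p q : ℝ) (h f g φ ψ : ℝ → ℝ)
    (hab : a < b) (hp : 1 < p) (hpq : 1 / p + 1 / q = 1)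
    (hh : ContinuousOn h (Set.Icc a b)) (hhnn : ∀ t ∈ Set.Icc a b, 0 ≤ h t)
    (hf : ContinuousOn f (Set.Icc a b)) (hfnn : ∀ t ∈ Set.Icc a b, 0 ≤ f t)
    (hg : ContinuousOn g (Set.Icc a b)) (hgnn : ∀ t ∈ Set.Icc a b, 0 ≤ g t)
    (hφ : ContinuousOn φ (Set.Icc a b)) (hφpos : ∀ t ∈ Set.Icc a b, 0 < φ t)
    (hψ : ContinuousOn ψ (Set.Icc a b)) (hψpos : ∀ t ∈ Set.Icc a b, 0 < ψ t)
    (H : ℝ → ℝ) (hH : ∀ y, H y = h y * ψ y ^ (-p)) :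
    (∫ y in a..b, ∫ x in a..y, h y * f x * g y)
      ≤ (∫ x in a..b, φ x ^ p * f x ^ p * ∫ y in x..b, H y) ^ (1 / p) *
        (∫ y in a..b, ψ y ^ q * g y ^ q * h y * ∫ x in a..y, φ x ^ (-q)) ^ (1 / q) := by
  have hpq' : p.HolderConjugate q :=
    Real.holderConjugate_iff.2 ⟨hp, by simpa [one_div] using hpq⟩
  have inner_eq : ∀ y, ∫ x in a..y, h y * f x * g y = h y * g y * ∫ x in a..y, f x :=
    fun y => by
      simp only [mul_right_comm (h y) _ (g y)]
      exact intervalIntegral.integral_const_mul _ _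
  have swap : ∫ y in a..b, h y * ψ y ^ (-p) * ∫ x in a..y, φ x ^ p * f x ^ p
      = ∫ x in a..b, φ x ^ p * f x ^ p * ∫ y in x..b, H y := by
    simp only [hH, mul_comm (h _ * _)]
    exact integral_primitive_mul_eq hab.le
      ((hφ.rpow_const fun _ _ => Or.inr hpq'.nonneg).mul
        (hf.rpow_const fun _ _ => Or.inr hpq'.nonneg))
      (hh.mul (hψ.rpow_const fun t ht => Or.inl (hψpos t ht).ne'))
  simp only [inner_eq, ← swap]
  exact integral_mul_mul_integral_le hab.le hpq' hh hhnn hf hfnn hg hgnn hφ hφpos hψ hψpos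
end

section
/- Let a < b be real numbers and let p > 1, q with 1/p + 1/q = 1. Let h, f : ℝ → ℝ be continuous and nonnegative on [a,b] with h positive on [a,b], and let φ, ψ : ℝ → ℝ be continuous and positive on [a,b]. Define H(y) = h(y)·ψ(y)^(−p). Then ∫_a^b H(y)·(∫_y^b φ(x)^(−q) dx)^(1−p)·(∫_y^b f(x) dx)^p dy ≤ ∫_a^b φ(x)^p·f(x)^p·(∫_a^x H(y) dy) dx, where the integrand on the left is understood with the convention 0^(1−p)·0 = 0 at y = b. (Second (Hardy-type) inequality of Corollary 3.7, continuous case 𝕋 = ℝ.) -/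
/-!
Hölder's inequality on `[y, b]` applied to `f = (φ f) · φ⁻¹` gives
`∫_y^b f ≤ (∫_y^b φ^p f^p)^(1/p) (∫_y^b φ^(-q))^(1/q)`, and since `p / q = p - 1` this
turns into `(∫_y^b φ^(-q))^(1-p) (∫_y^b f)^p ≤ ∫_y^b φ^p f^p`. Multiplying by `H y ≥ 0` and
integrating, the left side is bounded by `∫_a^b H(y) ∫_y^b φ^p f^p`, which equals the right
side by exchanging the order of integration over the triangle `a ≤ y ≤ x ≤ b` (an integration
by parts).
-/

open MeasureTheory intervalIntegral Set

/-- Also valid for `G = 0`, where `F = 0` is forced and `0 ^ (1 - p) * 0 ^ p = 0`. -/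
lemma Real.rpow_one_sub_mul_rpow_le_of_le_rpow_mul_rpow {p q F G T : ℝ}
    (hpq : p.HolderConjugate q) (hF : 0 ≤ F) (hG : 0 ≤ G) (hT : 0 ≤ T)
    (h : F ≤ T ^ (1 / p) * G ^ (1 / q)) :
    G ^ (1 - p) * F ^ p ≤ T := by
  rcases hG.eq_or_lt with rfl | hG
  · have hF0 : F = 0 :=
      le_antisymm (by simpa [Real.zero_rpow hpq.symm.inv_ne_zero] using h) hF
    simp [hF0, Real.zero_rpow hpq.ne_zero, hT]
  · have hFp : F ^ p ≤ T * G ^ (p - 1) := calc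
      F ^ p ≤ (T ^ (1 / p) * G ^ (1 / q)) ^ p := Real.rpow_le_rpow hF h hpq.nonneg
      _ = T * G ^ (p - 1) := by
        rw [Real.mul_rpow (by positivity) (by positivity), ← Real.rpow_mul hT,
          ← Real.rpow_mul hG.le, one_div_mul_cancel hpq.ne_zero, Real.rpow_one,
          ← hpq.div_conj_eq_sub_one, one_div_mul_eq_div]
    calc G ^ (1 - p) * F ^ p ≤ G ^ (1 - p) * (T * G ^ (p - 1)) := by gcongr
      _ = T := by rw [mul_left_comm, ← Real.rpow_add hG]; simp

lemma ContinuousOn.memLp_restrict_Icc {E : Type*} [NormedAddCommGroup E] {f : ℝ → E} {a b : ℝ}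
    (hf : ContinuousOn f (Icc a b)) (p : ENNReal) : MemLp f p (volume.restrict (Icc a b)) := by
  obtain ⟨C, hC⟩ := isCompact_Icc.exists_bound_of_continuousOn hf
  exact MemLp.of_bound (hf.aestronglyMeasurable measurableSet_Icc) C
    ((ae_restrict_iff' measurableSet_Icc).2 (ae_of_all _ hC))

namespace intervalIntegral

variable {a b p q : ℝ} {f g w : ℝ → ℝ}

theorem integral_mul_le_Lp_mul_Lq_of_nonneg_of_continuousOn (hpq : p.HolderConjugate q)
    (hab : a ≤ b) (hf : ContinuousOn f (Icc a b)) (hg : ContinuousOn g (Icc a b))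
    (hf₀ : ∀ x ∈ Icc a b, 0 ≤ f x) (hg₀ : ∀ x ∈ Icc a b, 0 ≤ g x) :
    ∫ x in a..b, f x * g x ≤
      (∫ x in a..b, f x ^ p) ^ (1 / p) * (∫ x in a..b, g x ^ q) ^ (1 / q) := by
  simp only [integral_of_le hab, ← integral_Icc_eq_integral_Ioc]
  exact integral_mul_le_Lp_mul_Lq_of_nonneg hpq
    ((ae_restrict_iff' measurableSet_Icc).2 (ae_of_all _ hf₀))
    ((ae_restrict_iff' measurableSet_Icc).2 (ae_of_all _ hg₀))
    (hf.memLp_restrict_Icc _) (hg.memLp_restrict_Icc _)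

theorem integral_le_weighted_Lp_mul_Lq (hpq : p.HolderConjugate q) (hab : a ≤ b)
    (hf : ContinuousOn f (Icc a b)) (hw : ContinuousOn w (Icc a b))
    (hf₀ : ∀ x ∈ Icc a b, 0 ≤ f x) (hw₀ : ∀ x ∈ Icc a b, 0 < w x) :
    ∫ x in a..b, f x ≤
      (∫ x in a..b, w x ^ p * f x ^ p) ^ (1 / p) * (∫ x in a..b, w x ^ (-q)) ^ (1 / q) := by
  have hI : uIcc a b = Icc a b := uIcc_of_le hab
  calc ∫ x in a..b, f x = ∫ x in a..b, (w x * f x) * (w x)⁻¹ :=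
        integral_congr fun x hx => by field_simp [(hw₀ x (hI ▸ hx)).ne']
    _ ≤ (∫ x in a..b, (w x * f x) ^ p) ^ (1 / p) * (∫ x in a..b, (w x)⁻¹ ^ q) ^ (1 / q) :=
        integral_mul_le_Lp_mul_Lq_of_nonneg_of_continuousOn hpq hab (hw.mul hf)
          (hw.inv₀ fun x hx => (hw₀ x hx).ne')
          (fun x hx => mul_nonneg (hw₀ x hx).le (hf₀ x hx))
          fun x hx => inv_nonneg.2 (hw₀ x hx).le
    _ = _ := by
        rw [integral_congr fun x hx => Real.mul_rpow (hw₀ x (hI ▸ hx)).le (hf₀ x (hI ▸ hx)),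
          integral_congr (f := fun x => (w x)⁻¹ ^ q) (g := fun x => w x ^ (-q)) fun x hx => by
            have hwx := (hw₀ x (hI ▸ hx)).le
            dsimp only
            rw [Real.inv_rpow hwx, Real.rpow_neg hwx]]

theorem rpow_one_sub_mul_rpow_le_integral_weighted (hpq : p.HolderConjugate q)
    (hab : a ≤ b) (hf : ContinuousOn f (Icc a b)) (hw : ContinuousOn w (Icc a b))
    (hf₀ : ∀ x ∈ Icc a b, 0 ≤ f x) (hw₀ : ∀ x ∈ Icc a b, 0 < w x) :
    (∫ x in a..b, w x ^ (-q)) ^ (1 - p) * (∫ x in a..b, f x) ^ p ≤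
      ∫ x in a..b, w x ^ p * f x ^ p :=
  Real.rpow_one_sub_mul_rpow_le_of_le_rpow_mul_rpow hpq (integral_nonneg hab hf₀)
    (integral_nonneg hab fun x hx => (Real.rpow_pos_of_pos (hw₀ x hx) _).le)
    (integral_nonneg hab fun x hx =>
      mul_nonneg (Real.rpow_nonneg (hw₀ x hx).le _) (Real.rpow_nonneg (hf₀ x hx) _))
    (integral_le_weighted_Lp_mul_Lq hpq hab hf hw hf₀ hw₀)

theorem integral_mono_on_of_nonneg (hab : a ≤ b) (hf : ∀ x ∈ Icc a b, 0 ≤ f x)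
    (hg : IntervalIntegrable g volume a b) (h : ∀ x ∈ Icc a b, f x ≤ g x) :
    ∫ x in a..b, f x ≤ ∫ x in a..b, g x := by
  rw [integral_of_le hab, integral_of_le hab]
  exact integral_mono_of_nonneg
    ((ae_restrict_iff' measurableSet_Ioc).2 (ae_of_all _ fun x hx => hf x (Ioc_subset_Icc_self hx)))
    hg.1
    ((ae_restrict_iff' measurableSet_Ioc).2 (ae_of_all _ fun x hx => h x (Ioc_subset_Icc_self hx)))

theorem hasDerivAt_integral_of_continuousOn_Icc {E : Type*} [NormedAddCommGroup E]
    [NormedSpace ℝ E] [CompleteSpace E] {u : ℝ → E} (hu : ContinuousOn u (Icc a b))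
    {c x : ℝ} (hc : c ∈ Icc a b) (hx : x ∈ Ioo a b) :
    HasDerivAt (fun t => ∫ s in c..t, u s) (u x) x :=
  integral_hasDerivAt_right
    (hu.mono (uIcc_subset_Icc hc (Ioo_subset_Icc_self hx))).intervalIntegrable
    ((hu.mono Ioo_subset_Icc_self).stronglyMeasurableAtFilter isOpen_Ioo x hx)
    (hu.continuousAt (Icc_mem_nhds hx.1 hx.2))

theorem integral_mul_integral_from_eq_integral_mul_integral_to (hab : a ≤ b) {u v : ℝ → ℝ}
    (hu : ContinuousOn u (Icc a b)) (hv : ContinuousOn v (Icc a b)) :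
    ∫ y in a..b, u y * ∫ x in y..b, v x = ∫ x in a..b, v x * ∫ y in a..x, u y := by
  have hI : uIcc a b = Icc a b := uIcc_of_le hab
  have hU : ContinuousOn (fun x => ∫ y in a..x, u y) (uIcc a b) :=
    continuousOn_primitive_interval (hI ▸ hu.integrableOn_Icc)
  have hV : ContinuousOn (fun y => ∫ x in y..b, v x) (uIcc a b) :=
    continuousOn_primitive_interval_left (hI ▸ hv.integrableOn_Icc)
  have hmem : ∀ x ∈ Ioo (min a b) (max a b), x ∈ Ioo a b := by
    simp [min_eq_left hab, max_eq_right hab]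
  have hV' : ∀ x ∈ Ioo a b, HasDerivAt (fun y => ∫ x in y..b, v x) (-v x) x := fun x hx => by
    rw [show (fun y => ∫ x in y..b, v x) = -fun y => ∫ x in b..y, v x from
      funext fun y => integral_symm b y]
    exact (hasDerivAt_integral_of_continuousOn_Icc hv (right_mem_Icc.2 hab) hx).neg
  have key := integral_deriv_mul_eq_sub_of_hasDeriv_right (u' := u) (v' := fun x => -v x) hU hV
    (fun x hx => (hasDerivAt_integral_of_continuousOn_Icc hu (left_mem_Icc.2 hab)
      (hmem x hx)).hasDerivWithinAt)
    (fun x hx => (hV' x (hmem x hx)).hasDerivWithinAt)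
    (hu.mono hI.subset).intervalIntegrable (hv.mono hI.subset).neg.intervalIntegrable
  simp only [integral_same, mul_zero, zero_mul, sub_zero, mul_neg, ← sub_eq_add_neg] at key
  have huV : IntervalIntegrable (fun y => u y * ∫ x in y..b, v x) volume a b :=
    ((hu.mono hI.subset).mul hV).intervalIntegrable
  have hUv : IntervalIntegrable (fun x => (∫ y in a..x, u y) * v x) volume a b :=
    (hU.mul (hv.mono hI.subset)).intervalIntegrable
  rw [integral_sub huV hUv, sub_eq_zero] at key
  simpa only [mul_comm] using key

end intervalIntegral

/-- Second (Hardy-type) inequality of Corollary 3.7, continuous case 𝕋 = ℝ. -/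
theorem corollary37_second_inequality_continuous
    (a b p q : ℝ) (h f φ ψ : ℝ → ℝ)
    (hab : a < b) (hp : 1 < p) (hpq : 1 / p + 1 / q = 1)
    (hh : ContinuousOn h (Set.Icc a b)) (hhpos : ∀ t ∈ Set.Icc a b, 0 < h t)
    (hf : ContinuousOn f (Set.Icc a b)) (hfnn : ∀ t ∈ Set.Icc a b, 0 ≤ f t)
    (hφ : ContinuousOn φ (Set.Icc a b)) (hφpos : ∀ t ∈ Set.Icc a b, 0 < φ t)
    (hψ : ContinuousOn ψ (Set.Icc a b)) (hψpos : ∀ t ∈ Set.Icc a b, 0 < ψ t)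
    (H : ℝ → ℝ) (hH : ∀ y, H y = h y * ψ y ^ (-p)) :
    (∫ y in a..b, H y * (∫ x in y..b, φ x ^ (-q)) ^ (1 - p) * (∫ x in y..b, f x) ^ p)
      ≤ ∫ x in a..b, φ x ^ p * f x ^ p * ∫ y in a..x, H y := by
  have hpq' : p.HolderConjugate q :=
    Real.holderConjugate_iff.2 ⟨hp, by simpa only [one_div] using hpq⟩
  have hHc : ContinuousOn H (Icc a b) :=
    (hh.mul (hψ.rpow_const fun y hy => Or.inl (hψpos y hy).ne')).congr fun y _ => hH y
  have hH₀ : ∀ y ∈ Icc a b, 0 ≤ H y := fun y hy =>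
    hH y ▸ mul_nonneg (hhpos y hy).le (Real.rpow_nonneg (hψpos y hy).le _)
  have hg : ContinuousOn (fun x => φ x ^ p * f x ^ p) (Icc a b) :=
    (hφ.rpow_const fun _ _ => Or.inr hpq'.nonneg).mul (hf.rpow_const fun _ _ => Or.inr hpq'.nonneg)
  have hT : ContinuousOn (fun y => ∫ x in y..b, φ x ^ p * f x ^ p) (uIcc a b) :=
    continuousOn_primitive_interval_left (uIcc_of_le hab.le ▸ hg.integrableOn_Icc)
  calc _ ≤ ∫ y in a..b, H y * ∫ x in y..b, φ x ^ p * f x ^ p := by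
        refine integral_mono_on_of_nonneg hab.le (fun y hy => ?_)
          ((hHc.mono (uIcc_of_le hab.le).subset).mul hT).intervalIntegrable fun y hy => ?_ <;>
          have hsub : Icc y b ⊆ Icc a b := Icc_subset_Icc_left hy.1
        · have := hH₀ y hy
          have : 0 ≤ ∫ x in y..b, φ x ^ (-q) :=
            integral_nonneg hy.2 fun x hx => (Real.rpow_pos_of_pos (hφpos x (hsub hx)) _).le
          have : 0 ≤ ∫ x in y..b, f x := integral_nonneg hy.2 fun x hx => hfnn x (hsub hx)
          positivity
        · rw [mul_assoc]
          exact mul_le_mul_of_nonneg_left (rpow_one_sub_mul_rpow_le_integral_weighted hpq' hy.2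
            (hf.mono hsub) (hφ.mono hsub) (fun x hx => hfnn x (hsub hx))
            fun x hx => hφpos x (hsub hx)) (hH₀ y hy)
    _ = _ := integral_mul_integral_from_eq_integral_mul_integral_to hab.le hHc hg
end

section
/- Let a < b be real numbers and let p > 1, q with 1/p + 1/q = 1. Let K : ℝ × ℝ → ℝ be continuous and nonnegative on [a,b] × [a,b], let f : ℝ → ℝ be continuous and nonnegative on [a,b], and let φ, ψ : ℝ → ℝ be continuous and positive on [a,b]. Let F₁, G₁ : ℝ → ℝ be continuous functions with G₁ positive on [a,b], such that ∫_a^b K(x,y)·ψ(y)^(−p) dy ≤ F₁(x) for all x ∈ [a,b] and ∫_a^b K(x,y)·φ(x)^(−q) dx ≤ G₁(y) for all y ∈ [a,b]. Then ∫_a^b G₁(y)^(1−p)·ψ(y)^(−p)·(∫_a^b K(x,y)·f(x) dx)^p dy ≤ ∫_a^b φ(x)^p·F₁(x)·f(x)^p dx. (Inequality (8) of Theorem 3.8, continuous case 𝕋 = ℝ.) -/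
/-!
For fixed `y`, Hölder's inequality applied to
`K f = (K ^ (1/p) φ f) · (K ^ (1/q) φ⁻¹)`, together with `∫ K(x,y) φ(x)^(-q) dx ≤ G₁(y)`, gives
`G₁(y)^(1-p) (∫ K(x,y) f(x) dx)^p ≤ ∫ K(x,y) φ(x)^p f(x)^p dx`.
Multiplying by `ψ(y)^(-p)`, integrating in `y` and swapping the integrals by Fubini, the inner
integral becomes `∫ K(x,y) ψ(y)^(-p) dy ≤ F₁(x)`.
-/

open MeasureTheory Set
open scoped ENNReal

section

variable {α : Type*} [MeasurableSpace α] {μ : Measure α} {p q : ℝ} {k g w : α → ℝ}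

/-- Hölder's inequality applied to `k * g = (k ^ (1/p) * w * g) * (k ^ (1/q) * w⁻¹)`. -/
theorem integral_mul_le_of_weight (hpq : p.HolderConjugate q) (hk : ∀ᵐ x ∂μ, 0 ≤ k x)
    (hg : ∀ᵐ x ∂μ, 0 ≤ g x) (hw : ∀ᵐ x ∂μ, 0 < w x)
    (hu : MemLp (fun x => k x ^ (1 / p) * (w x * g x)) (ENNReal.ofReal p) μ)
    (hv : MemLp (fun x => k x ^ (1 / q) * (w x)⁻¹) (ENNReal.ofReal q) μ) :
    ∫ x, k x * g x ∂μ ≤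
      (∫ x, k x * (w x ^ p * g x ^ p) ∂μ) ^ (1 / p) * (∫ x, k x * w x ^ (-q) ∂μ) ^ (1 / q) := by
  have holder := integral_mul_le_Lp_mul_Lq_of_nonneg hpq
    (by filter_upwards [hk, hg, hw] with x hkx hgx hwx using by positivity)
    (by filter_upwards [hk, hw] with x hkx hwx using by positivity) hu hv
  have h_prod : ∫ x, k x ^ (1 / p) * (w x * g x) * (k x ^ (1 / q) * (w x)⁻¹) ∂μ
      = ∫ x, k x * g x ∂μ := by
    refine integral_congr_ae ?_
    filter_upwards [hk, hw] with x hkx hwx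
    have hk_split : k x ^ (1 / p) * k x ^ (1 / q) = k x := by
      rw [← Real.rpow_add' hkx (by simp [hpq.inv_add_inv_eq_one]),
        one_div, one_div, hpq.inv_add_inv_eq_one, Real.rpow_one]
    calc _ = (k x ^ (1 / p) * k x ^ (1 / q)) * (w x * (w x)⁻¹) * g x := by ring
      _ = k x * g x := by rw [hk_split, mul_inv_cancel₀ hwx.ne', mul_one]
  have h_left : ∫ x, (k x ^ (1 / p) * (w x * g x)) ^ p ∂μ
      = ∫ x, k x * (w x ^ p * g x ^ p) ∂μ := by
    refine integral_congr_ae ?_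
    filter_upwards [hk, hg, hw] with x hkx hgx hwx
    rw [Real.mul_rpow (by positivity) (by positivity), Real.mul_rpow hwx.le hgx,
      ← Real.rpow_mul hkx, one_div_mul_cancel hpq.ne_zero, Real.rpow_one]
  have h_right : ∫ x, (k x ^ (1 / q) * (w x)⁻¹) ^ q ∂μ = ∫ x, k x * w x ^ (-q) ∂μ := by
    refine integral_congr_ae ?_
    filter_upwards [hk, hw] with x hkx hwx
    rw [Real.mul_rpow (by positivity) (by positivity), Real.inv_rpow hwx.le,
      ← Real.rpow_neg hwx.le, ← Real.rpow_mul hkx, one_div_mul_cancel hpq.symm.ne_zero,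
      Real.rpow_one]
  rwa [h_prod, h_left, h_right] at holder

theorem rpow_one_sub_mul_rpow_integral_mul_le {B : ℝ} (hpq : p.HolderConjugate q)
    (hk : ∀ᵐ x ∂μ, 0 ≤ k x) (hg : ∀ᵐ x ∂μ, 0 ≤ g x) (hw : ∀ᵐ x ∂μ, 0 < w x)
    (hu : MemLp (fun x => k x ^ (1 / p) * (w x * g x)) (ENNReal.ofReal p) μ)
    (hv : MemLp (fun x => k x ^ (1 / q) * (w x)⁻¹) (ENNReal.ofReal q) μ)
    (hB : 0 < B) (hkw : ∫ x, k x * w x ^ (-q) ∂μ ≤ B) :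
    B ^ (1 - p) * (∫ x, k x * g x ∂μ) ^ p ≤ ∫ x, k x * (w x ^ p * g x ^ p) ∂μ := by
  set I := ∫ x, k x * (w x ^ p * g x ^ p) ∂μ
  set J := ∫ x, k x * w x ^ (-q) ∂μ
  have hI : 0 ≤ I := integral_nonneg_of_ae <| by
    filter_upwards [hk, hg, hw] with x hkx hgx hwx using by positivity
  have hJ : 0 ≤ J := integral_nonneg_of_ae <| by
    filter_upwards [hk, hw] with x hkx hwx using by positivity
  have hkg : 0 ≤ ∫ x, k x * g x ∂μ := integral_nonneg_of_ae <| by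
    filter_upwards [hk, hg] with x hkx hgx using mul_nonneg hkx hgx
  have hp : 0 < p := hpq.pos
  have h_pow : (∫ x, k x * g x ∂μ) ^ p ≤ I * B ^ (p - 1) :=
    calc (∫ x, k x * g x ∂μ) ^ p ≤ (I ^ (1 / p) * J ^ (1 / q)) ^ p :=
          Real.rpow_le_rpow hkg (integral_mul_le_of_weight hpq hk hg hw hu hv) hp.le
      _ = I * J ^ (p - 1) := by
          rw [Real.mul_rpow (by positivity) (by positivity), ← Real.rpow_mul hI,
            ← Real.rpow_mul hJ, one_div_mul_cancel hp.ne', Real.rpow_one, one_div_mul_eq_div,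
            hpq.div_conj_eq_sub_one]
      _ ≤ I * B ^ (p - 1) := by gcongr; exact hpq.sub_one_pos.le
  calc B ^ (1 - p) * (∫ x, k x * g x ∂μ) ^ p ≤ B ^ (1 - p) * (I * B ^ (p - 1)) := by gcongr
    _ = I := by rw [mul_left_comm, ← Real.rpow_add hB]; simp

end

section

variable {X : Type*} [TopologicalSpace X] [MeasurableSpace X] [OpensMeasurableSpace X]
  {μ : Measure X} [IsFiniteMeasureOnCompacts μ] {s t : Set X}

theorem ContinuousOn.memLp_restrict_of_subset {u : X → ℝ} (hs : IsCompact s)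
    (ht : MeasurableSet t) (hts : t ⊆ s) (hu : ContinuousOn u s) (r : ℝ≥0∞) :
    MemLp u r (μ.restrict t) := by
  have : IsFiniteMeasure (μ.restrict t) :=
    isFiniteMeasure_restrict.2 ((measure_mono hts).trans_lt hs.measure_lt_top).ne
  obtain ⟨C, hC⟩ := hs.exists_bound_of_continuousOn hu
  exact .of_bound ((hu.mono hts).aestronglyMeasurable ht) C
    (ae_restrict_of_forall_mem ht fun x hx => hC x (hts hx))

theorem rpow_one_sub_mul_rpow_setIntegral_mul_le_of_continuousOn {p q B : ℝ} {k g w : X → ℝ}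
    (hpq : p.HolderConjugate q) (hs : IsCompact s) (ht : MeasurableSet t) (hts : t ⊆ s)
    (hk : ContinuousOn k s) (hk₀ : ∀ x ∈ s, 0 ≤ k x)
    (hg : ContinuousOn g s) (hg₀ : ∀ x ∈ s, 0 ≤ g x)
    (hw : ContinuousOn w s) (hw₀ : ∀ x ∈ s, 0 < w x)
    (hB : 0 < B) (hkw : ∫ x in t, k x * w x ^ (-q) ∂μ ≤ B) :
    B ^ (1 - p) * (∫ x in t, k x * g x ∂μ) ^ p ≤ ∫ x in t, k x * (w x ^ p * g x ^ p) ∂μ := by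
  have on_t {P : X → Prop} (h : ∀ x ∈ s, P x) : ∀ᵐ x ∂μ.restrict t, P x :=
    ae_restrict_of_forall_mem ht fun x hx => h x (hts hx)
  refine rpow_one_sub_mul_rpow_integral_mul_le hpq (on_t hk₀) (on_t hg₀) (on_t hw₀) ?_ ?_ hB hkw
  · refine ContinuousOn.memLp_restrict_of_subset hs ht hts ?_ _
    exact (hk.rpow_const fun _ _ => Or.inr hpq.one_div_nonneg).mul (hw.mul hg)
  · refine ContinuousOn.memLp_restrict_of_subset hs ht hts ?_ _
    exact (hk.rpow_const fun _ _ => Or.inr hpq.symm.one_div_nonneg).mul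
      (hw.inv₀ fun x hx => (hw₀ x hx).ne')

end

theorem ContinuousOn.integrable_prod_restrict_Ioc {a b c d : ℝ} {H : ℝ × ℝ → ℝ}
    (hH : ContinuousOn H (Icc a b ×ˢ Icc c d)) :
    Integrable H ((volume.restrict (Ioc a b)).prod (volume.restrict (Ioc c d))) := by
  rw [Measure.prod_restrict, ← Measure.volume_eq_prod]
  exact (hH.integrableOn_compact (isCompact_Icc.prod isCompact_Icc)).mono_set
    (prod_mono Ioc_subset_Icc_self Ioc_subset_Icc_self)

theorem integral_le_integral_mul_of_integral_kernel_le {α β : Type*} [MeasurableSpace α]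
    [MeasurableSpace β] {μ : Measure α} {ν : Measure β} [SFinite μ] [SFinite ν]
    {K : α × β → ℝ} {c F : α → ℝ} {w L : β → ℝ}
    (hint : Integrable (fun z => w z.2 * (K z * c z.1)) (μ.prod ν))
    (hc : ∀ᵐ x ∂μ, 0 ≤ c x) (hKw : ∀ᵐ x ∂μ, ∫ y, K (x, y) * w y ∂ν ≤ F x)
    (hcF : Integrable (fun x => c x * F x) μ)
    (hL₀ : ∀ᵐ y ∂ν, 0 ≤ L y) (hL : ∀ᵐ y ∂ν, L y ≤ w y * ∫ x, K (x, y) * c x ∂μ) :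
    ∫ y, L y ∂ν ≤ ∫ x, c x * F x ∂μ := by
  have h_inner (y : β) : w y * ∫ x, K (x, y) * c x ∂μ = ∫ x, w y * (K (x, y) * c x) ∂μ :=
    (integral_const_mul _ _).symm
  have h_outer (x : α) : ∫ y, w y * (K (x, y) * c x) ∂ν = c x * ∫ y, K (x, y) * w y ∂ν := by
    rw [← integral_const_mul]; congr 1 with y; ring
  calc ∫ y, L y ∂ν ≤ ∫ y, w y * ∫ x, K (x, y) * c x ∂μ ∂ν :=
        integral_mono_of_nonneg hL₀ (by simpa only [h_inner] using hint.integral_prod_right) hL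
    _ = ∫ x, c x * ∫ y, K (x, y) * w y ∂ν ∂μ := by
        simp only [h_inner, ← h_outer]
        exact (integral_integral_swap (f := fun x y => w y * (K (x, y) * c x)) hint).symm
    _ ≤ ∫ x, c x * F x ∂μ := by
        refine integral_mono_ae (by simpa only [h_outer] using hint.integral_prod_left) hcF ?_
        filter_upwards [hc, hKw] with x hcx hKwx using mul_le_mul_of_nonneg_left hKwx hcx

theorem bounded_kernel_hardy_inequality_continuous_general
    (a b p q : ℝ) (K : ℝ × ℝ → ℝ) (f φ ψ F₁ G₁ : ℝ → ℝ)
    (hab : a < b) (hp : 1 < p) (hpq : 1 / p + 1 / q = 1)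
    (hK : ContinuousOn K (Set.Icc a b ×ˢ Set.Icc a b))
    (hKnn : ∀ z ∈ Set.Icc a b ×ˢ Set.Icc a b, 0 ≤ K z)
    (hf : ContinuousOn f (Set.Icc a b)) (hfnn : ∀ t ∈ Set.Icc a b, 0 ≤ f t)
    (hφ : ContinuousOn φ (Set.Icc a b)) (hφpos : ∀ t ∈ Set.Icc a b, 0 < φ t)
    (hψ : ContinuousOn ψ (Set.Icc a b)) (hψpos : ∀ t ∈ Set.Icc a b, 0 < ψ t)
    (hF₁ : ContinuousOn F₁ (Set.Icc a b))
    (hG₁pos : ∀ y ∈ Set.Icc a b, 0 < G₁ y)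
    (hFbound : ∀ x ∈ Set.Icc a b, (∫ y in a..b, K (x, y) * ψ y ^ (-p)) ≤ F₁ x)
    (hGbound : ∀ y ∈ Set.Icc a b, (∫ x in a..b, K (x, y) * φ x ^ (-q)) ≤ G₁ y) :
    (∫ y in a..b, G₁ y ^ (1 - p) * ψ y ^ (-p) * (∫ x in a..b, K (x, y) * f x) ^ p)
      ≤ ∫ x in a..b, φ x ^ p * F₁ x * f x ^ p := by
  have hpq' : p.HolderConjugate q :=
    Real.holderConjugate_iff.2 ⟨hp, by simpa only [one_div] using hpq⟩
  have on_Ioc {P : ℝ → Prop} (h : ∀ x ∈ Icc a b, P x) : ∀ᵐ x ∂volume.restrict (Ioc a b), P x :=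
    ae_restrict_of_forall_mem measurableSet_Ioc fun x hx => h x (Ioc_subset_Icc_self hx)
  set c : ℝ → ℝ := fun x => φ x ^ p * f x ^ p
  have hc : ContinuousOn c (Icc a b) := (hφ.rpow_const fun _ _ => Or.inr hpq'.nonneg).mul
    (hf.rpow_const fun _ _ => Or.inr hpq'.nonneg)
  have hc₀ (x) (hx : x ∈ Icc a b) : 0 ≤ c x := by
    have := hφpos x hx; have := hfnn x hx; positivity
  have hH : ContinuousOn (fun z : ℝ × ℝ => ψ z.2 ^ (-p) * (K z * c z.1)) (Icc a b ×ˢ Icc a b) :=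
    ((hψ.comp continuousOn_snd fun _ hz => hz.2).rpow_const
      fun _ hz => Or.inl (hψpos _ hz.2).ne').mul (hK.mul (hc.comp continuousOn_fst fun z hz => hz.1))
  simp only [intervalIntegral.integral_of_le hab.le] at hFbound hGbound ⊢
  calc _ ≤ ∫ x in Ioc a b, c x * F₁ x := by
        refine integral_le_integral_mul_of_integral_kernel_le hH.integrable_prod_restrict_Ioc
          (on_Ioc hc₀) (on_Ioc hFbound) ((hc.mul hF₁).integrableOn_Icc.mono_set Ioc_subset_Icc_self)
          (on_Ioc fun y hy => ?_) (on_Ioc fun y hy => ?_)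
        · have := hG₁pos y hy; have := hψpos y hy
          have : 0 ≤ ∫ x in Ioc a b, K (x, y) * f x :=
            integral_nonneg_of_ae (on_Ioc fun x hx => mul_nonneg (hKnn _ ⟨hx, hy⟩) (hfnn x hx))
          positivity
        · have hKy : ContinuousOn (fun x => K (x, y)) (Icc a b) :=
            hK.comp (by fun_prop) fun x hx => ⟨hx, hy⟩
          have holder := rpow_one_sub_mul_rpow_setIntegral_mul_le_of_continuousOn hpq'
            isCompact_Icc measurableSet_Ioc Ioc_subset_Icc_self hKy (fun x hx => hKnn _ ⟨hx, hy⟩)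
            hf hfnn hφ hφpos (hG₁pos y hy) (hGbound y hy)
          calc _ = ψ y ^ (-p) * (G₁ y ^ (1 - p) * (∫ x in Ioc a b, K (x, y) * f x) ^ p) := by ring
            _ ≤ _ := mul_le_mul_of_nonneg_left holder (Real.rpow_nonneg (hψpos y hy).le _)
    _ = ∫ x in Ioc a b, φ x ^ p * F₁ x * f x ^ p := by
        congr 1 with x; simp only [c]; ring

/-- Inequality (8) of Theorem 3.8, continuous case 𝕋 = ℝ. -/
theorem bounded_kernel_hardy_inequality_continuous
    (a b p q : ℝ) (K : ℝ × ℝ → ℝ) (f φ ψ F₁ G₁ : ℝ → ℝ)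
    (hab : a < b) (hp : 1 < p) (hpq : 1 / p + 1 / q = 1)
    (hK : ContinuousOn K (Set.Icc a b ×ˢ Set.Icc a b))
    (hKnn : ∀ z ∈ Set.Icc a b ×ˢ Set.Icc a b, 0 ≤ K z)
    (hf : ContinuousOn f (Set.Icc a b)) (hfnn : ∀ t ∈ Set.Icc a b, 0 ≤ f t)
    (hφ : ContinuousOn φ (Set.Icc a b)) (hφpos : ∀ t ∈ Set.Icc a b, 0 < φ t)
    (hψ : ContinuousOn ψ (Set.Icc a b)) (hψpos : ∀ t ∈ Set.Icc a b, 0 < ψ t)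
    (hF₁ : ContinuousOn F₁ (Set.Icc a b)) (hG₁ : ContinuousOn G₁ (Set.Icc a b))
    (hG₁pos : ∀ y ∈ Set.Icc a b, 0 < G₁ y)
    (hFbound : ∀ x ∈ Set.Icc a b, (∫ y in a..b, K (x, y) * ψ y ^ (-p)) ≤ F₁ x)
    (hGbound : ∀ y ∈ Set.Icc a b, (∫ x in a..b, K (x, y) * φ x ^ (-q)) ≤ G₁ y) :
    (∫ y in a..b, G₁ y ^ (1 - p) * ψ y ^ (-p) * (∫ x in a..b, K (x, y) * f x) ^ p)
      ≤ ∫ x in a..b, φ x ^ p * F₁ x * f x ^ p :=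
  bounded_kernel_hardy_inequality_continuous_general a b p q K f φ ψ F₁ G₁ hab hp hpq hK hKnn hf
    hfnn hφ hφpos hψ hψpos hF₁ hG₁pos hFbound hGbound
end

section
/- Let a < b and c < d be real numbers, p > 1, q with 1/p + 1/q = 1, and C > 0. Let F : ℝ → ℝ be continuous and positive on [a,b], f : ℝ → ℝ continuous on [a,b], g : ℝ → ℝ continuous on [c,d], M, N : ℝ → ℝ continuous and positive, and L : ℝ × ℝ → ℝ continuous and positive. Assume 0 < ∫_a^b M(f(t))^p·F(t)^p dt < ∞. Suppose that for every function G : ℝ → ℝ that is continuous and positive on [c,d] with 0 < ∫_c^d N(g(t))^q·G(t)^q dt < ∞, the inequality ∫_a^b ∫_c^d F(x)·G(y)/L(f(x),g(y)) dy dx ≤ C·(∫_a^b M(f(t))^p·F(t)^p dt)^(1/p)·(∫_c^d N(g(t))^q·G(t)^q dt)^(1/q) holds. Then ∫_c^d N(g(y))^(−p)·(∫_a^b F(x)/L(f(x),g(y)) dx)^p dy ≤ C^p·∫_a^b M(f(t))^p·F(t)^p dt. (Direction (9) ⟹ (10) of Theorem 3.9, continuous case 𝕋 = ℝ.) -/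
/-!
Test the hypothesis against `G = N(g)^(-p) H^(p-1)`, where `H y = ∫ x in a..b, F x / L (f x, g y)`:
this is the choice that makes Hölder's inequality sharp. Indeed `N(g)^q G^q = N(g)^(-p) H^p`, and by
Fubini the double integral equals `∫ G H = ∫ N(g)^(-p) H^p =: B`. So the hypothesis reads
`B ≤ C A^(1/p) B^(1/q)` with `A = ∫ M(f)^p F^p`, and dividing by `B^(1/q) > 0` and raising to
the power `p` gives `B ≤ C^p A`.
-/

open Set Function Real intervalIntegral

section ParametricIntegral

variable {E : Type*} [NormedAddCommGroup E] [NormedSpace ℝ E] {a b c d : ℝ}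

theorem continuousOn_intervalIntegral_of_continuousOn_uncurry {k : ℝ → ℝ → E}
    (hab : a ≤ b) (hcd : c ≤ d) (hk : ContinuousOn (uncurry k) (Icc a b ×ˢ Icc c d)) :
    ContinuousOn (fun y ↦ ∫ x in a..b, k x y) (Icc c d) := by
  -- Clamping both variables into the rectangle gives a continuous extension of `k`.
  set k' : ℝ → ℝ → E := fun y x ↦ k (projIcc a b hab x) (projIcc c d hcd y)
  have hclamp :
      Continuous fun z : ℝ × ℝ ↦ ((projIcc a b hab z.2 : ℝ), (projIcc c d hcd z.1 : ℝ)) := by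
    fun_prop
  have hk' : Continuous (uncurry k') :=
    hk.comp_continuous hclamp fun z ↦ ⟨Subtype.mem _, Subtype.mem _⟩
  refine (continuous_parametric_intervalIntegral_of_continuous' hk' a b).continuousOn.congr
    fun y hy ↦ integral_congr fun x hx ↦ ?_
  rw [uIcc_of_le hab] at hx
  simp only [k', projIcc_of_mem hab hx, projIcc_of_mem hcd hy]

theorem intervalIntegral_intervalIntegral_swap_of_continuousOn [CompleteSpace E]
    {k : ℝ → ℝ → E} (hk : ContinuousOn (uncurry k) (uIcc a b ×ˢ uIcc c d)) :
    ∫ x in a..b, ∫ y in c..d, k x y = ∫ y in c..d, ∫ x in a..b, k x y :=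
  MeasureTheory.intervalIntegral_intervalIntegral_swap <|
    (hk.integrableOn_compact (isCompact_uIcc.prod isCompact_uIcc)).mono_set
      (prod_mono uIoc_subset_uIcc uIoc_subset_uIcc)

end ParametricIntegral

namespace Real.HolderConjugate

variable {p q : ℝ} (hpq : p.HolderConjugate q)
include hpq

theorem rpow_conj_mul_rpow_conj {n h : ℝ} (hn : 0 < n) (hh : 0 ≤ h) :
    n ^ q * (n ^ (-p) * h ^ (p - 1)) ^ q = n ^ (-p) * h ^ p := by
  have hexp : q + -p * q = -p := by linarith [hpq.mul_eq_add]
  rw [mul_rpow (rpow_nonneg hn.le _) (rpow_nonneg hh _), ← rpow_mul hn.le, ← rpow_mul hh,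
    hpq.sub_one_mul_conj, ← mul_assoc, ← rpow_add hn, hexp]

theorem le_rpow_of_le_mul_rpow_conj {B K : ℝ} (hB : 0 < B) (h : B ≤ K * B ^ (1 / q)) :
    B ≤ K ^ p := by
  have hsplit : B ^ (1 / p) * B ^ (1 / q) = B := by
    rw [← rpow_add hB, one_div, one_div, hpq.inv_add_inv_eq_one, rpow_one]
  have hroot : B ^ (1 / p) ≤ K :=
    le_of_mul_le_mul_right (by rwa [hsplit]) (rpow_pos_of_pos hB _)
  calc B = (B ^ (1 / p)) ^ p := by rw [one_div, rpow_inv_rpow hB.le hpq.ne_zero]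
    _ ≤ K ^ p := rpow_le_rpow (rpow_nonneg hB.le _) hroot hpq.nonneg

end Real.HolderConjugate

theorem integral_rpow_intervalIntegral_le_of_dual_bound {a b c d p q K : ℝ}
    (hpq : p.HolderConjugate q) (hab : a < b) (hcd : c < d) {k : ℝ → ℝ → ℝ} {w : ℝ → ℝ}
    (hk : ContinuousOn (uncurry k) (Icc a b ×ˢ Icc c d))
    (hkpos : ∀ z ∈ Icc a b ×ˢ Icc c d, 0 < uncurry k z)
    (hw : ContinuousOn w (Icc c d)) (hwpos : ∀ y ∈ Icc c d, 0 < w y)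
    (hdual : ∀ G : ℝ → ℝ, ContinuousOn G (Icc c d) → (∀ t ∈ Icc c d, 0 < G t) →
      0 < (∫ t in c..d, w t ^ q * G t ^ q) →
      (∫ x in a..b, ∫ y in c..d, k x y * G y) ≤ K * (∫ t in c..d, w t ^ q * G t ^ q) ^ (1 / q)) :
    (∫ y in c..d, w y ^ (-p) * (∫ x in a..b, k x y) ^ p) ≤ K ^ p := by
  set H : ℝ → ℝ := fun y ↦ ∫ x in a..b, k x y
  have hHcont : ContinuousOn H (Icc c d) :=
    continuousOn_intervalIntegral_of_continuousOn_uncurry hab.le hcd.le hk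
  have hHpos : ∀ y ∈ Icc c d, 0 < H y := fun y hy ↦
    intervalIntegral_pos_of_pos_on
      ((hk.comp (continuousOn_id.prodMk continuousOn_const)
        fun x hx ↦ ⟨hx, hy⟩).intervalIntegrable_of_Icc hab.le)
      (fun x hx ↦ hkpos (x, y) ⟨Ioo_subset_Icc_self hx, hy⟩) hab
  set G : ℝ → ℝ := fun y ↦ w y ^ (-p) * H y ^ (p - 1)
  have hGcont : ContinuousOn G (Icc c d) :=
    (hw.rpow_const fun y hy ↦ Or.inl (hwpos y hy).ne').mul
      (hHcont.rpow_const fun _ _ ↦ Or.inr hpq.sub_one_pos.le)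
  have hGpos : ∀ y ∈ Icc c d, 0 < G y := fun y hy ↦
    mul_pos (rpow_pos_of_pos (hwpos y hy) _) (rpow_pos_of_pos (hHpos y hy) _)
  set B := ∫ y in c..d, w y ^ (-p) * H y ^ p
  have hBpos : 0 < B :=
    intervalIntegral_pos_of_pos_on
      (((hw.rpow_const fun y hy ↦ Or.inl (hwpos y hy).ne').mul
        (hHcont.rpow_const fun _ _ ↦ Or.inr hpq.nonneg)).intervalIntegrable_of_Icc hcd.le)
      (fun y hy ↦ mul_pos (rpow_pos_of_pos (hwpos y (Ioo_subset_Icc_self hy)) _)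
        (rpow_pos_of_pos (hHpos y (Ioo_subset_Icc_self hy)) _)) hcd
  have hnorm : (∫ t in c..d, w t ^ q * G t ^ q) = B := by
    refine integral_congr fun y hy ↦ ?_
    rw [uIcc_of_le hcd.le] at hy
    exact hpq.rpow_conj_mul_rpow_conj (hwpos y hy) (hHpos y hy).le
  have hpair : (∫ x in a..b, ∫ y in c..d, k x y * G y) = B := by
    rw [intervalIntegral_intervalIntegral_swap_of_continuousOn]
    · refine integral_congr fun y hy ↦ ?_
      rw [uIcc_of_le hcd.le] at hy
      rw [integral_mul_const]
      change H y * (w y ^ (-p) * H y ^ (p - 1)) = w y ^ (-p) * H y ^ p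
      have hH : H y ≠ 0 := (hHpos y hy).ne'
      rw [rpow_sub_one hH]
      field_simp
    · rw [uIcc_of_le hab.le, uIcc_of_le hcd.le]
      exact hk.mul (hGcont.comp continuousOn_snd fun z hz ↦ hz.2)
  have h := hdual G hGcont hGpos (hnorm ▸ hBpos)
  rw [hnorm, hpair] at h
  exact hpq.le_rpow_of_le_mul_rpow_conj hBpos h

theorem sulaiman_type_forward_continuous_general
    (a b c d p q C : ℝ) (F f g M N : ℝ → ℝ) (L : ℝ × ℝ → ℝ)
    (hab : a < b) (hcd : c < d) (hp : 1 < p) (hpq : 1 / p + 1 / q = 1) (hC : 0 < C)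
    (hF : ContinuousOn F (Set.Icc a b)) (hFpos : ∀ t ∈ Set.Icc a b, 0 < F t)
    (hf : ContinuousOn f (Set.Icc a b)) (hg : ContinuousOn g (Set.Icc c d))
    (hN : Continuous N) (hNpos : ∀ x, 0 < N x)
    (hL : Continuous L) (hLpos : ∀ z, 0 < L z)
    (hMF : 0 < ∫ t in a..b, M (f t) ^ p * F t ^ p)
    (h9 : ∀ G : ℝ → ℝ, ContinuousOn G (Set.Icc c d) →
      (∀ t ∈ Set.Icc c d, 0 < G t) →
      0 < (∫ t in c..d, N (g t) ^ q * G t ^ q) →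
      (∫ x in a..b, ∫ y in c..d, F x * G y / L (f x, g y))
        ≤ C * (∫ t in a..b, M (f t) ^ p * F t ^ p) ^ (1 / p) *
            (∫ t in c..d, N (g t) ^ q * G t ^ q) ^ (1 / q)) :
    (∫ y in c..d, N (g y) ^ (-p) * (∫ x in a..b, F x / L (f x, g y)) ^ p)
      ≤ C ^ p * ∫ t in a..b, M (f t) ^ p * F t ^ p := by
  have hpq' : p.HolderConjugate q := holderConjugate_iff.2 ⟨hp, by simpa only [one_div] using hpq⟩
  have hk : ContinuousOn (uncurry fun x y ↦ F x / L (f x, g y)) (Icc a b ×ˢ Icc c d) :=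
    (hF.comp continuousOn_fst fun z hz ↦ hz.1).div
      (hL.comp_continuousOn ((hf.comp continuousOn_fst fun z hz ↦ hz.1).prodMk
        (hg.comp continuousOn_snd fun z hz ↦ hz.2)))
      fun z _ ↦ (hLpos _).ne'
  calc _ ≤ (C * (∫ t in a..b, M (f t) ^ p * F t ^ p) ^ (1 / p)) ^ p :=
        integral_rpow_intervalIntegral_le_of_dual_bound hpq' hab hcd hk
          (fun z hz ↦ div_pos (hFpos _ hz.1) (hLpos _))
          (w := fun y ↦ N (g y)) (hN.comp_continuousOn hg) (fun y _ ↦ hNpos _)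
          fun G hG hGpos hGnorm ↦ by simpa only [mul_div_right_comm] using h9 G hG hGpos hGnorm
    _ = C ^ p * ∫ t in a..b, M (f t) ^ p * F t ^ p := by
      rw [mul_rpow hC.le (rpow_nonneg hMF.le _), one_div, rpow_inv_rpow hMF.le hpq'.ne_zero]

/-- Direction (9) ⟹ (10) of Theorem 3.9, continuous case 𝕋 = ℝ. -/
theorem sulaiman_type_forward_continuous
    (a b c d p q C : ℝ) (F f g M N : ℝ → ℝ) (L : ℝ × ℝ → ℝ)
    (hab : a < b) (hcd : c < d) (hp : 1 < p) (hpq : 1 / p + 1 / q = 1) (hC : 0 < C)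
    (hF : ContinuousOn F (Set.Icc a b)) (hFpos : ∀ t ∈ Set.Icc a b, 0 < F t)
    (hf : ContinuousOn f (Set.Icc a b)) (hg : ContinuousOn g (Set.Icc c d))
    (hM : Continuous M) (hMpos : ∀ x, 0 < M x)
    (hN : Continuous N) (hNpos : ∀ x, 0 < N x)
    (hL : Continuous L) (hLpos : ∀ z, 0 < L z)
    (hMF : 0 < ∫ t in a..b, M (f t) ^ p * F t ^ p)
    (h9 : ∀ G : ℝ → ℝ, ContinuousOn G (Set.Icc c d) →
      (∀ t ∈ Set.Icc c d, 0 < G t) →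
      0 < (∫ t in c..d, N (g t) ^ q * G t ^ q) →
      (∫ x in a..b, ∫ y in c..d, F x * G y / L (f x, g y))
        ≤ C * (∫ t in a..b, M (f t) ^ p * F t ^ p) ^ (1 / p) *
            (∫ t in c..d, N (g t) ^ q * G t ^ q) ^ (1 / q)) :
    (∫ y in c..d, N (g y) ^ (-p) * (∫ x in a..b, F x / L (f x, g y)) ^ p)
      ≤ C ^ p * ∫ t in a..b, M (f t) ^ p * F t ^ p :=
  sulaiman_type_forward_continuous_general a b c d p q C F f g M N L hab hcd hp hpq hC hF hFpos hf
    hg hN hNpos hL hLpos hMF h9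
end

section
/- Let s be a nonempty finite set of indices, let p > 1 and q be real numbers with 1/p + 1/q = 1, and let f, g : ι → ℝ be functions with f(k) > 0 and g(k) > 0 for all k ∈ s. Suppose there are constants m, M with 0 < m and m ≤ f(k)^p / g(k)^q ≤ M for all k ∈ s. Then (∑_{k∈s} f(k)^p)^(1/p) · (∑_{k∈s} g(k)^q)^(1/q) ≤ (M/m)^(1/(p·q)) · ∑_{k∈s} f(k)·g(k). (The reverse Hölder inequality of Theorem 3.1 in the discrete case, i.e. the time scale 𝕋 = ℤ with α = 1, where the diamond-alpha integral reduces to a finite sum.) -/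
/-!
Write `f^p = f · (f^p)^(1/q)`. The upper bound `f^p ≤ M g^q` turns this into
`f^p ≤ M^(1/q) f g`, and symmetrically the lower bound `g^q ≤ m⁻¹ f^p` gives
`g^q ≤ m^(-1/p) f g`. Summing, both `∑ f^p` and `∑ g^q` are controlled by `∑ f g`, and the
exponents `1/p + 1/q = 1` recombine the two bounds into `(M/m)^(1/(pq)) ∑ f g`.
-/

open Finset

namespace Real

lemma rpow_le_rpow_one_div_mul_mul_of_rpow_le_mul_rpow {p q c x y : ℝ} (hpq : p.HolderConjugate q)
    (hx : 0 ≤ x) (hy : 0 ≤ y) (hc : 0 ≤ c) (h : x ^ p ≤ c * y ^ q) :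
    x ^ p ≤ c ^ (1 / q) * (x * y) := by
  have hq := hpq.symm.pos
  have hroot : (x ^ p) ^ (1 / q) ≤ c ^ (1 / q) * y := by
    calc (x ^ p) ^ (1 / q) ≤ (c * y ^ q) ^ (1 / q) := by gcongr
      _ = c ^ (1 / q) * y := by
        rw [mul_rpow hc (rpow_nonneg hy q), ← rpow_mul hy, mul_one_div_cancel hq.ne', rpow_one]
  calc x ^ p = x ^ (1 + p * (1 / q)) := by
        rw [mul_one_div, hpq.div_conj_eq_sub_one, add_sub_cancel]
    _ = x * (x ^ p) ^ (1 / q) := by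
        rw [rpow_add' hx (by have := hpq.pos; positivity), rpow_one, rpow_mul hx]
    _ ≤ x * (c ^ (1 / q) * y) := by gcongr
    _ = c ^ (1 / q) * (x * y) := by ring

lemma rpow_one_div_mul_rpow_one_div_le_of_le_mul {p q F G A B T : ℝ} (hpq : p.HolderConjugate q)
    (hF : 0 ≤ F) (hG : 0 ≤ G) (hA : 0 ≤ A) (hB : 0 ≤ B) (hT : 0 ≤ T)
    (hFT : F ≤ A * T) (hGT : G ≤ B * T) :
    F ^ (1 / p) * G ^ (1 / q) ≤ A ^ (1 / p) * B ^ (1 / q) * T := by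
  have hp := hpq.one_div_nonneg
  have hq := hpq.symm.one_div_nonneg
  calc F ^ (1 / p) * G ^ (1 / q) ≤ (A * T) ^ (1 / p) * (B * T) ^ (1 / q) := by gcongr
    _ = A ^ (1 / p) * B ^ (1 / q) * (T ^ (1 / p) * T ^ (1 / q)) := by
        rw [mul_rpow hA hT, mul_rpow hB hT]; ring
    _ = A ^ (1 / p) * B ^ (1 / q) * T := by
        rw [← rpow_add' hT (by rw [hpq.one_div_add_one_div]; norm_num), hpq.one_div_add_one_div,
          div_one, rpow_one]

end Real

open Real in
/-- Reverse Hölder inequality (Theorem 3.1, discrete case 𝕋 = ℤ, α = 1). -/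
theorem reverse_holder_discrete {ι : Type*}
    (s : Finset ι) (p q m M : ℝ) (f g : ι → ℝ)
    (hs : s.Nonempty) (hp : 1 < p) (hpq : 1 / p + 1 / q = 1)
    (hfpos : ∀ k ∈ s, 0 < f k) (hgpos : ∀ k ∈ s, 0 < g k)
    (hm : 0 < m)
    (hlb : ∀ k ∈ s, m ≤ f k ^ p / g k ^ q)
    (hub : ∀ k ∈ s, f k ^ p / g k ^ q ≤ M) :
    (∑ k ∈ s, f k ^ p) ^ (1 / p) * (∑ k ∈ s, g k ^ q) ^ (1 / q)
      ≤ (M / m) ^ (1 / (p * q)) * ∑ k ∈ s, f k * g k := by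
  have hconj : p.HolderConjugate q := holderConjugate_iff.2 ⟨hp, by simpa only [one_div] using hpq⟩
  obtain ⟨k₀, hk₀⟩ := hs
  have hM : 0 ≤ M := hm.le.trans ((hlb k₀ hk₀).trans (hub k₀ hk₀))
  have hf_le : ∀ k ∈ s, f k ^ p ≤ M ^ (1 / q) * (f k * g k) := fun k hk =>
    rpow_le_rpow_one_div_mul_mul_of_rpow_le_mul_rpow hconj (hfpos k hk).le (hgpos k hk).le hM
      ((div_le_iff₀ (rpow_pos_of_pos (hgpos k hk) q)).1 (hub k hk))
  have hg_le : ∀ k ∈ s, g k ^ q ≤ m⁻¹ ^ (1 / p) * (f k * g k) := fun k hk => by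
    rw [mul_comm (f k)]
    refine rpow_le_rpow_one_div_mul_mul_of_rpow_le_mul_rpow hconj.symm (hgpos k hk).le
      (hfpos k hk).le (inv_nonneg.2 hm.le) ?_
    rw [inv_mul_eq_div, le_div_iff₀ hm, mul_comm]
    exact (le_div_iff₀ (rpow_pos_of_pos (hgpos k hk) q)).1 (hlb k hk)
  calc (∑ k ∈ s, f k ^ p) ^ (1 / p) * (∑ k ∈ s, g k ^ q) ^ (1 / q)
      ≤ (M ^ (1 / q)) ^ (1 / p) * (m⁻¹ ^ (1 / p)) ^ (1 / q) * ∑ k ∈ s, f k * g k := by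
        refine rpow_one_div_mul_rpow_one_div_le_of_le_mul hconj
          (sum_nonneg fun k hk => rpow_nonneg (hfpos k hk).le p)
          (sum_nonneg fun k hk => rpow_nonneg (hgpos k hk).le q) (by positivity) (by positivity)
          (sum_nonneg fun k hk => (mul_pos (hfpos k hk) (hgpos k hk)).le) ?_ ?_
        · simpa only [mul_sum] using sum_le_sum hf_le
        · simpa only [mul_sum] using sum_le_sum hg_le
    _ = (M / m) ^ (1 / (p * q)) * ∑ k ∈ s, f k * g k := by
        rw [← rpow_mul hM, ← rpow_mul (inv_nonneg.2 hm.le), mul_comm (1 / q), one_div_mul_one_div,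
          ← mul_rpow hM (inv_nonneg.2 hm.le), ← div_eq_mul_inv]
end

section
/- Let s be a finite set of indices, let p > 1 and q with 1/p + 1/q = 1. Let K : ι × ι → ℝ be nonnegative on s × s, let f, g : ι → ℝ be nonnegative on s, and let φ, ψ : ι → ℝ be positive on s. Define F(x) = ∑_{y∈s} K(x,y)·ψ(y)^(−p) and G(y) = ∑_{x∈s} K(x,y)·φ(x)^(−q). Then ∑_{x∈s} ∑_{y∈s} K(x,y)·f(x)·g(y) ≤ (∑_{x∈s} φ(x)^p·F(x)·f(x)^p)^(1/p) · (∑_{y∈s} ψ(y)^q·G(y)·g(y)^q)^(1/q). (Inequality (5) of Theorem 3.4 in the discrete case, i.e. the time scale 𝕋 = ℤ with α = 1.) -/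
/-!
Split each term of the double sum as
`K f(x) g(y) = (K^(1/p) φ(x) f(x) / ψ(y)) · (K^(1/q) ψ(y) g(y) / φ(x))`
and apply Hölder's inequality on `s × t`: the `p`-th powers of the first factors sum to
`∑ₓ φ(x)^p F(x) f(x)^p`, the `q`-th powers of the second ones to `∑ᵧ ψ(y)^q G(y) g(y)^q`.
-/

open Finset

namespace Real

lemma mul_mul_eq_rpow_mul_div_mul_rpow_mul_div {p q K u v a b : ℝ} (hpq : 1 / p + 1 / q = 1)
    (hK : 0 ≤ K) (hu : u ≠ 0) (hv : v ≠ 0) :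
    K * a * b = K ^ (1 / p) * (u * a / v) * (K ^ (1 / q) * (v * b / u)) := by
  have hK_split : K ^ (1 / p) * K ^ (1 / q) = K := by
    rw [← rpow_add' hK (by rw [hpq]; norm_num), hpq, rpow_one]
  calc K * a * b = K ^ (1 / p) * K ^ (1 / q) * a * b := by rw [hK_split]
    _ = _ := by field_simp

lemma rpow_one_div_mul_div_rpow {p K u v a : ℝ} (hp : p ≠ 0) (hK : 0 ≤ K) (hu : 0 ≤ u)
    (hv : 0 ≤ v) (ha : 0 ≤ a) :
    (K ^ (1 / p) * (u * a / v)) ^ p = u ^ p * (K * v ^ (-p)) * a ^ p := by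
  rw [mul_rpow (rpow_nonneg hK _) (by positivity), ← rpow_mul hK, one_div_mul_cancel hp,
    rpow_one, div_rpow (by positivity) hv, mul_rpow hu ha, rpow_neg hv]
  ring

theorem sum_sum_kernel_mul_le_weighted_Lp_mul_Lq {ι κ : Type*} {p q : ℝ} (hpq : p.HolderConjugate q)
    (s : Finset ι) (t : Finset κ) {K : ι × κ → ℝ} {f φ : ι → ℝ} {g ψ : κ → ℝ}
    (hK : ∀ x ∈ s, ∀ y ∈ t, 0 ≤ K (x, y)) (hf : ∀ x ∈ s, 0 ≤ f x) (hg : ∀ y ∈ t, 0 ≤ g y)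
    (hφ : ∀ x ∈ s, 0 < φ x) (hψ : ∀ y ∈ t, 0 < ψ y) :
    ∑ x ∈ s, ∑ y ∈ t, K (x, y) * f x * g y
      ≤ (∑ x ∈ s, φ x ^ p * (∑ y ∈ t, K (x, y) * ψ y ^ (-p)) * f x ^ p) ^ (1 / p) *
        (∑ y ∈ t, ψ y ^ q * (∑ x ∈ s, K (x, y) * φ x ^ (-q)) * g y ^ q) ^ (1 / q) := by
  set a : ι × κ → ℝ := fun z ↦ K z ^ (1 / p) * (φ z.1 * f z.1 / ψ z.2)
  set b : ι × κ → ℝ := fun z ↦ K z ^ (1 / q) * (ψ z.2 * g z.2 / φ z.1)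
  have ha : ∀ z ∈ s ×ˢ t, 0 ≤ a z := fun z hz ↦ by
    obtain ⟨hx, hy⟩ := mem_product.1 hz
    have := hK _ hx _ hy; have := hf _ hx; have := hφ _ hx; have := hψ _ hy
    positivity
  have hb : ∀ z ∈ s ×ˢ t, 0 ≤ b z := fun z hz ↦ by
    obtain ⟨hx, hy⟩ := mem_product.1 hz
    have := hK _ hx _ hy; have := hg _ hy; have := hφ _ hx; have := hψ _ hy
    positivity
  calc ∑ x ∈ s, ∑ y ∈ t, K (x, y) * f x * g y = ∑ z ∈ s ×ˢ t, a z * b z := by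
        rw [sum_product]
        refine sum_congr rfl fun x hx ↦ sum_congr rfl fun y hy ↦ ?_
        exact mul_mul_eq_rpow_mul_div_mul_rpow_mul_div
          (by simpa using hpq.one_div_add_one_div) (hK x hx y hy)
          (hφ x hx).ne' (hψ y hy).ne'
    _ ≤ (∑ z ∈ s ×ˢ t, a z ^ p) ^ (1 / p) * (∑ z ∈ s ×ˢ t, b z ^ q) ^ (1 / q) :=
        inner_le_Lp_mul_Lq_of_nonneg _ hpq ha hb
    _ = _ := by
        rw [sum_product, sum_product_right]
        congr 2 <;> refine sum_congr rfl fun i hi ↦ ?_ <;> rw [mul_sum, sum_mul] <;>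
          refine sum_congr rfl fun j hj ↦ ?_
        · exact rpow_one_div_mul_div_rpow hpq.ne_zero (hK i hi j hj) (hφ i hi).le
            (hψ j hj).le (hf i hi)
        · exact rpow_one_div_mul_div_rpow hpq.symm.ne_zero (hK j hj i hi) (hψ i hi).le
            (hφ j hj).le (hg i hi)

end Real

/-- Inequality (5) of Theorem 3.4, discrete case 𝕋 = ℤ, α = 1. -/
theorem hardy_type_first_inequality_discrete {ι : Type*}
    (s : Finset ι) (p q : ℝ) (K : ι × ι → ℝ) (f g φ ψ : ι → ℝ)
    (hp : 1 < p) (hpq : 1 / p + 1 / q = 1)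
    (hKnn : ∀ x ∈ s, ∀ y ∈ s, 0 ≤ K (x, y))
    (hfnn : ∀ k ∈ s, 0 ≤ f k) (hgnn : ∀ k ∈ s, 0 ≤ g k)
    (hφpos : ∀ k ∈ s, 0 < φ k) (hψpos : ∀ k ∈ s, 0 < ψ k)
    (F G : ι → ℝ)
    (hF : ∀ x, F x = ∑ y ∈ s, K (x, y) * ψ y ^ (-p))
    (hG : ∀ y, G y = ∑ x ∈ s, K (x, y) * φ x ^ (-q)) :
    (∑ x ∈ s, ∑ y ∈ s, K (x, y) * f x * g y)
      ≤ (∑ x ∈ s, φ x ^ p * F x * f x ^ p) ^ (1 / p) *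
        (∑ y ∈ s, ψ y ^ q * G y * g y ^ q) ^ (1 / q) := by
  have hconj : p.HolderConjugate q :=
    Real.holderConjugate_iff.mpr ⟨hp, by simpa only [one_div] using hpq⟩
  simp only [hF, hG]
  exact Real.sum_sum_kernel_mul_le_weighted_Lp_mul_Lq hconj s s hKnn hfnn hgnn hφpos hψpos
end

section
/- Let s be a finite set of indices, let p > 1 and q with 1/p + 1/q = 1. Let K : ι × ι → ℝ be positive on s × s, let f : ι → ℝ be nonnegative on s, and let φ, ψ : ι → ℝ be positive on s. Define F(x) = ∑_{y∈s} K(x,y)·ψ(y)^(−p) and G(y) = ∑_{x∈s} K(x,y)·φ(x)^(−q). Then ∑_{y∈s} G(y)^(1−p)·ψ(y)^(−p)·(∑_{x∈s} K(x,y)·f(x))^p ≤ ∑_{x∈s} φ(x)^p·F(x)·f(x)^p. (The Hardy inequality (6) of Theorem 3.4 in the discrete case, i.e. the time scale 𝕋 = ℤ with α = 1.) -/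
/-!
For each `y`, write `∑ₓ K(x,y) f(x)` as a sum against the weights `w x = K(x,y) φ(x)^(-q)`,
whose total mass is `G y`, of the values `φ(x)^q f(x)`. Jensen's inequality for `t ↦ t^p`
bounds `G(y)^(1-p) (∑ₓ K(x,y) f(x))^p` by `∑ₓ K(x,y) φ(x)^p f(x)^p`, since `q (p - 1) = p`.
Multiplying by `ψ(y)^(-p)`, summing over `y` and exchanging the sums gives the right-hand side.
-/

open Finset

namespace Real

variable {ι : Type*} (s : Finset ι)

theorem weight_rpow_one_sub_mul_inner_rpow_le {p : ℝ} (hp : 1 ≤ p) (w u : ι → ℝ)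
    (hw : ∀ i ∈ s, 0 ≤ w i) (hu : ∀ i ∈ s, 0 ≤ u i) :
    (∑ i ∈ s, w i) ^ (1 - p) * (∑ i ∈ s, w i * u i) ^ p ≤ ∑ i ∈ s, w i * u i ^ p := by
  have hT : 0 ≤ ∑ i ∈ s, w i * u i ^ p :=
    sum_nonneg fun i hi ↦ mul_nonneg (hw i hi) (rpow_nonneg (hu i hi) p)
  rcases (sum_nonneg hw).eq_or_lt with hW | hW
  · have hS : ∑ i ∈ s, w i * u i = 0 :=
      sum_eq_zero fun i hi ↦ by rw [(sum_eq_zero_iff_of_nonneg hw).1 hW.symm i hi, zero_mul]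
    rwa [hS, zero_rpow (by linarith), mul_zero]
  set W := ∑ i ∈ s, w i
  have hS : 0 ≤ ∑ i ∈ s, w i * u i := sum_nonneg fun i hi ↦ mul_nonneg (hw i hi) (hu i hi)
  calc W ^ (1 - p) * (∑ i ∈ s, w i * u i) ^ p
      = W * (∑ i ∈ s, w i / W * u i) ^ p := by
        simp_rw [div_mul_eq_mul_div, ← sum_div]
        rw [div_rpow hS hW.le, rpow_sub hW, rpow_one]
        field_simp
    _ ≤ W * ∑ i ∈ s, w i / W * u i ^ p := by
        gcongr
        refine rpow_arith_mean_le_arith_mean_rpow s _ _ (fun i hi ↦ div_nonneg (hw i hi) hW.le)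
          ?_ hu hp
        rw [← sum_div, div_self hW.ne']
    _ = ∑ i ∈ s, w i * u i ^ p := by
        rw [mul_sum]
        exact sum_congr rfl fun i _ ↦ by field_simp

theorem HolderConjugate.rpow_one_sub_mul_inner_rpow_le {p q : ℝ} (hpq : p.HolderConjugate q)
    (k f φ : ι → ℝ) (hk : ∀ i ∈ s, 0 ≤ k i) (hf : ∀ i ∈ s, 0 ≤ f i) (hφ : ∀ i ∈ s, 0 < φ i) :
    (∑ i ∈ s, k i * φ i ^ (-q)) ^ (1 - p) * (∑ i ∈ s, k i * f i) ^ p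
      ≤ ∑ i ∈ s, k i * (φ i ^ p * f i ^ p) := by
  have hinner : ∑ i ∈ s, k i * f i = ∑ i ∈ s, k i * φ i ^ (-q) * (φ i ^ q * f i) :=
    sum_congr rfl fun i hi ↦ by
      have hcancel : φ i ^ (-q) * φ i ^ q = 1 := by
        rw [← rpow_add (hφ i hi), neg_add_cancel, rpow_zero]
      linear_combination -(k i * f i) * hcancel
  have hpow : ∑ i ∈ s, k i * (φ i ^ p * f i ^ p)
      = ∑ i ∈ s, k i * φ i ^ (-q) * (φ i ^ q * f i) ^ p :=
    sum_congr rfl fun i hi ↦ by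
      have hφi := hφ i hi
      have hexp : φ i ^ (-q) * φ i ^ (q * p) = φ i ^ p := by
        rw [← rpow_add hφi]
        congr 1
        linear_combination hpq.sub_one_mul_conj
      rw [mul_rpow (rpow_nonneg hφi.le q) (hf i hi), ← rpow_mul hφi.le]
      linear_combination -(k i * f i ^ p) * hexp
  rw [hinner, hpow]
  exact weight_rpow_one_sub_mul_inner_rpow_le s hpq.lt.le _ _
    (fun i hi ↦ mul_nonneg (hk i hi) (rpow_nonneg (hφ i hi).le _))
    (fun i hi ↦ mul_nonneg (rpow_nonneg (hφ i hi).le _) (hf i hi))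

end Real

/-- Hardy inequality (6) of Theorem 3.4, discrete case 𝕋 = ℤ, α = 1. -/
theorem hardy_inequality_discrete {ι : Type*}
    (s : Finset ι) (p q : ℝ) (K : ι × ι → ℝ) (f φ ψ : ι → ℝ)
    (hp : 1 < p) (hpq : 1 / p + 1 / q = 1)
    (hKpos : ∀ x ∈ s, ∀ y ∈ s, 0 < K (x, y))
    (hfnn : ∀ k ∈ s, 0 ≤ f k)
    (hφpos : ∀ k ∈ s, 0 < φ k) (hψpos : ∀ k ∈ s, 0 < ψ k)
    (F G : ι → ℝ)
    (hF : ∀ x, F x = ∑ y ∈ s, K (x, y) * ψ y ^ (-p))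
    (hG : ∀ y, G y = ∑ x ∈ s, K (x, y) * φ x ^ (-q)) :
    (∑ y ∈ s, G y ^ (1 - p) * ψ y ^ (-p) * (∑ x ∈ s, K (x, y) * f x) ^ p)
      ≤ ∑ x ∈ s, φ x ^ p * F x * f x ^ p := by
  have hconj : p.HolderConjugate q := Real.holderConjugate_iff.mpr ⟨hp, by simpa using hpq⟩
  calc (∑ y ∈ s, G y ^ (1 - p) * ψ y ^ (-p) * (∑ x ∈ s, K (x, y) * f x) ^ p)
      = ∑ y ∈ s, ψ y ^ (-p) * (G y ^ (1 - p) * (∑ x ∈ s, K (x, y) * f x) ^ p) :=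
        sum_congr rfl fun _ _ ↦ by ring
    _ ≤ ∑ y ∈ s, ψ y ^ (-p) * ∑ x ∈ s, K (x, y) * (φ x ^ p * f x ^ p) := by
        gcongr with y hy
        · exact Real.rpow_nonneg (hψpos y hy).le _
        · rw [hG]
          exact hconj.rpow_one_sub_mul_inner_rpow_le s (fun x ↦ K (x, y)) f φ
            (fun x hx ↦ (hKpos x hx y hy).le) hfnn hφpos
    _ = ∑ x ∈ s, φ x ^ p * F x * f x ^ p := by
        simp_rw [hF, mul_sum, sum_mul]
        rw [sum_comm]
        exact sum_congr rfl fun _ _ ↦ sum_congr rfl fun _ _ ↦ by ring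
end
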